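/- arXiv:2211.13266 — 11 statements merged into one kernel-verified Lean document; each statement's English description precedes it below -/
import Mathlib

section
/- A Tychonoff space X is pseudocompact (every continuous real-valued function on X is bounded) if and only if every nonempty Gδ-subset of the Čech–Stone compactification βX has nonempty intersection with X (viewed as a subspace of βX). -/
open Set

/-- Hewitt's theorem: a Tychonoff space `X` is pseudocompact (every continuous real-valued
function on `X` is bounded) iff every nonempty `Gδ`-subset of the Čech–Stone
compactification `βX` meets (the canonical copy of) `X`. -/
theorem pseudocompact_iff_gdelta_meets
    (X : Type*) [TopologicalSpace X] [T35Space X] :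
    (∀ f : X → ℝ, Continuous f → ∃ M : ℝ, ∀ x, |f x| ≤ M) ↔
      ∀ G : Set (StoneCech X), IsGδ G → G.Nonempty →
        (G ∩ Set.range (stoneCechUnit : X → StoneCech X)).Nonempty := by
  constructor
  · -- pseudocompact → X is Gδ-dense in βX
    intro hpc G hG ⟨p, hp⟩
    by_contra hempty
    rw [Set.not_nonempty_iff_eq_empty] at hempty
    obtain ⟨U, hUopen, rfl⟩ := hG.eq_iInter_nat
    -- choose Urysohn functions
    have hfn : ∀ n : ℕ, ∃ f : C(StoneCech X, ℝ),
        Set.EqOn f 0 {p} ∧ Set.EqOn f 1 (U n)ᶜ ∧ ∀ y, f y ∈ Set.Icc (0:ℝ) 1 := fun n =>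
      exists_continuous_zero_one_of_isClosed isClosed_singleton (hUopen n).isClosed_compl
        (Set.disjoint_singleton_left.mpr (fun h => h (Set.mem_iInter.mp hp n)))
    choose f hf0 hf1 hf01 using hfn
    set F : StoneCech X → ℝ := fun y => ∑' n, (1/2 : ℝ)^n * f n y with hFdef
    have hsumm : ∀ y, Summable (fun n => (1/2 : ℝ)^n * f n y) := by
      intro y
      apply Summable.of_nonneg_of_le (fun n => mul_nonneg (by positivity) (hf01 n y).1)
        (fun n => ?_) (summable_geometric_of_lt_one (by norm_num) (by norm_num) : Summable fun n => (1/2:ℝ)^n)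
      calc (1/2:ℝ)^n * f n y ≤ (1/2:ℝ)^n * 1 :=
            mul_le_mul_of_nonneg_left (hf01 n y).2 (by positivity)
        _ = (1/2:ℝ)^n := mul_one _
    have hFcont : Continuous F := by
      apply continuous_tsum (u := fun n => (1/2:ℝ)^n)
        (fun n => continuous_const.mul (f n).continuous)
        (summable_geometric_of_lt_one (by norm_num) (by norm_num))
      intro n y
      show ‖(1/2:ℝ)^n * f n y‖ ≤ (1/2:ℝ)^n
      rw [Real.norm_eq_abs, abs_mul, abs_of_nonneg (by positivity : (0:ℝ) ≤ (1/2:ℝ)^n),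
        abs_of_nonneg (hf01 n y).1]
      calc (1/2:ℝ)^n * f n y ≤ (1/2:ℝ)^n * 1 :=
            mul_le_mul_of_nonneg_left (hf01 n y).2 (by positivity)
        _ = (1/2:ℝ)^n := mul_one _
    have hFp : F p = 0 := by
      have h0 : (fun n => (1/2:ℝ)^n * f n p) = fun _ => (0:ℝ) := funext fun n => by
        rw [hf0 n (Set.mem_singleton p), Pi.zero_apply, mul_zero]
      simp only [hFdef, h0, tsum_zero]
    have hFnonneg : ∀ y, 0 ≤ F y :=
      fun y => tsum_nonneg (fun n => mul_nonneg (by positivity) (hf01 n y).1)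
    -- on X, F is bounded below by positive values
    have hFx : ∀ x : X, 0 < F (stoneCechUnit x) := by
      intro x
      have hx : stoneCechUnit x ∉ ⋂ n, U n := by
        intro h
        have : stoneCechUnit x ∈ (⋂ n, U n) ∩ Set.range stoneCechUnit :=
          ⟨h, Set.mem_range_self x⟩
        rw [hempty] at this
        exact this
      obtain ⟨n, hn⟩ : ∃ n, stoneCechUnit x ∉ U n := by
        by_contra h; push_neg at h; exact hx (Set.mem_iInter.mpr h)
      have h1 : f n (stoneCechUnit x) = 1 := hf1 n hn
      have : (1/2:ℝ)^n ≤ F (stoneCechUnit x) := by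
        have hle := Summable.le_tsum (hsumm (stoneCechUnit x)) n
          (fun m _ => mul_nonneg (by positivity) (hf01 m _).1)
        rw [h1, mul_one] at hle
        exact hle
      linarith [pow_pos (by norm_num : (0:ℝ) < 1/2) n]
    -- X is nonempty (since βX contains p and X is dense)
    have hXne : Nonempty X := by
      by_contra h
      rw [not_nonempty_iff] at h
      have : (Set.range (stoneCechUnit : X → StoneCech X)) = ∅ := Set.range_eq_empty _
      have hd := denseRange_stoneCechUnit (α := X).closure_range
      rw [this, closure_empty] at hd
      exact (Set.eq_empty_iff_forall_notMem.mp hd.symm p) trivial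
    -- apply pseudocompactness to 1/F∘u
    obtain ⟨M, hM⟩ := hpc (fun x => (F (stoneCechUnit x))⁻¹)
      ((hFcont.comp continuous_stoneCechUnit).inv₀ (fun x => (hFx x).ne'))
    obtain ⟨x₀⟩ := hXne
    have hMpos : 0 < M := lt_of_lt_of_le (by
      rw [abs_of_nonneg (le_of_lt (inv_pos.mpr (hFx x₀)))] at *
      exact inv_pos.mpr (hFx x₀)) (hM x₀)
    have hlow : ∀ x : X, M⁻¹ ≤ F (stoneCechUnit x) := by
      intro x
      have h1 : (F (stoneCechUnit x))⁻¹ ≤ M := by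
        have := hM x
        rwa [abs_of_nonneg (le_of_lt (inv_pos.mpr (hFx x)))] at this
      have h2 := inv_anti₀ (inv_pos.mpr (hFx x)) h1
      rwa [inv_inv] at h2
    -- closed set argument: F ≥ M⁻¹ on a closed set containing range u, hence everywhere
    have hCclosed : IsClosed {y : StoneCech X | M⁻¹ ≤ F y} :=
      isClosed_le continuous_const hFcont
    have hsub : Set.range (stoneCechUnit : X → StoneCech X) ⊆ {y | M⁻¹ ≤ F y} := by
      rintro _ ⟨x, rfl⟩; exact hlow x
    have : p ∈ {y : StoneCech X | M⁻¹ ≤ F y} := by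
      have := closure_mono hsub
      rw [denseRange_stoneCechUnit.closure_range, hCclosed.closure_eq] at this
      exact this trivial
    rw [Set.mem_setOf_eq, hFp] at this
    exact absurd this (not_le.mpr (inv_pos.mpr hMpos))
  · -- Gδ-density → pseudocompact
    intro hG f hf
    by_contra h
    push_neg at h
    -- g = 1/(1+|f|) : X → Icc 0 1
    have hg1 : ∀ x : X, (1 + |f x|)⁻¹ ∈ Set.Icc (0:ℝ) 1 := by
      intro x
      constructor
      · positivity
      · rw [inv_le_one_iff₀]; right; linarith [abs_nonneg (f x)]
    set g : X → Set.Icc (0:ℝ) 1 := fun x => ⟨(1 + |f x|)⁻¹, hg1 x⟩ with hgdef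
    have hgcont : Continuous g := by
      apply Continuous.subtype_mk
      exact ((continuous_const.add hf.abs).inv₀
        (fun x => (by positivity : (0:ℝ) < 1 + |f x|).ne'))
    set E : StoneCech X → Set.Icc (0:ℝ) 1 := stoneCechExtend hgcont with hEdef
    set F : StoneCech X → ℝ := fun y => (E y : ℝ) with hFdef
    have hFcont : Continuous F :=
      continuous_subtype_val.comp (continuous_stoneCechExtend hgcont)
    have hFx : ∀ x : X, F (stoneCechUnit x) = (1 + |f x|)⁻¹ := by
      intro x
      have hE := congrFun (stoneCechExtend_extends hgcont) x
      simp only [Function.comp_apply] at hE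
      have : E (stoneCechUnit x) = g x := hE
      rw [hFdef]
      simp only [this, hgdef]
    -- zero set of F is Gδ
    have hZ : IsGδ (F ⁻¹' {0}) := by
      have heq : F ⁻¹' {0} = ⋂ n : ℕ, F ⁻¹' Metric.ball (0:ℝ) (1/(n+1)) := by
        ext y
        simp only [Set.mem_preimage, Set.mem_singleton_iff, Set.mem_iInter, Metric.mem_ball,
          Real.dist_eq, sub_zero]
        constructor
        · intro h n; rw [h, abs_zero]; positivity
        · intro h
          by_contra hne
          obtain ⟨n, hn⟩ := exists_nat_one_div_lt (abs_pos.mpr hne)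
          exact absurd (h n) (not_lt.mpr (le_of_lt hn))
      rw [heq]
      exact IsGδ.iInter_of_isOpen (fun n => Metric.isOpen_ball.preimage hFcont)
    -- zero set is nonempty: 0 ∈ closure (range (F∘u)) ⊆ F '' univ
    have himg : IsCompact (F '' Set.univ) := isCompact_univ.image hFcont
    have h0mem : (0:ℝ) ∈ F '' Set.univ := by
      have hcl : closure (Set.range (fun x => F (stoneCechUnit x))) ⊆ F '' Set.univ := by
        apply closure_minimal ?_ himg.isClosed
        rintro _ ⟨x, rfl⟩
        exact ⟨stoneCechUnit x, trivial, rfl⟩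
      apply hcl
      rw [Metric.mem_closure_iff]
      intro ε hε
      obtain ⟨x, hx⟩ := h ε⁻¹
      refine ⟨F (stoneCechUnit x), Set.mem_range_self x, ?_⟩
      rw [hFx x, Real.dist_eq]
      have h1 : (0:ℝ) < 1 + |f x| := by positivity
      rw [abs_sub_comm, sub_zero, abs_of_nonneg (le_of_lt (inv_pos.mpr h1))]
      have h2 : ε⁻¹ < 1 + |f x| := by linarith
      calc (1 + |f x|)⁻¹ < (ε⁻¹)⁻¹ := by
            apply inv_strictAnti₀ (inv_pos.mpr hε) h2
        _ = ε := inv_inv ε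
    obtain ⟨p, -, hpF⟩ := h0mem
    have hZne : (F ⁻¹' {0}).Nonempty := ⟨p, hpF⟩
    obtain ⟨q, hq0, x, rfl⟩ := hG _ hZ hZne
    have : F (stoneCechUnit x) = 0 := hq0
    rw [hFx x] at this
    have h1 : (0:ℝ) < 1 + |f x| := by positivity
    exact absurd this (ne_of_gt (inv_pos.mpr h1))
end

section
/- Let κ be an infinite cardinal. A Tychonoff space X is κ-pseudocompact (for every continuous map f : X → ℝ^κ the image f(X) is compact) if and only if every nonempty G_κ-subset of βX meets X. -/
universe u

noncomputable def eMap (r : ℝ) : ℝ := r / (1 + |r|)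
noncomputable def psiMap (s : ℝ) : ℝ := s / (1 - |s|)

lemma eMap_abs_lt (r : ℝ) : |eMap r| < 1 := by
  have h1 : (0:ℝ) < 1 + |r| := by positivity
  rw [eMap, abs_div, abs_of_pos h1, div_lt_one h1]
  linarith
lemma eMap_mem (r : ℝ) : eMap r ∈ Set.Icc (-1:ℝ) 1 := by
  have := abs_lt.1 (eMap_abs_lt r)
  exact ⟨this.1.le, this.2.le⟩
lemma eMap_continuous : Continuous eMap :=
  continuous_id.div (by continuity) (fun r => by positivity)
lemma psi_eMap (r : ℝ) : psiMap (eMap r) = r := by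
  have h1 : (0:ℝ) < 1 + |r| := by positivity
  have h2 : 1 - |r| / (1 + |r|) = 1 / (1 + |r|) := by field_simp; ring
  rw [psiMap, eMap, abs_div, abs_of_pos h1, h2]
  field_simp
lemma psi_continuousAt {s : ℝ} (h : |s| < 1) : ContinuousAt psiMap s := by
  have : (1:ℝ) - |s| ≠ 0 := by
    have := abs_nonneg s; intro hc; linarith [abs_lt.1 h]
  exact ContinuousAt.div continuousAt_id
    ((continuous_const.sub continuous_abs).continuousAt) (by simpa using this)

/-- Retta's theorem: for an infinite cardinal `κ`, a Tychonoff space `X` is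
`κ`-pseudocompact (every continuous map into `ℝ^κ` has compact image) iff every nonempty
`G_κ`-subset of `βX` meets `X`. -/
theorem kappaPseudocompact_iff_gkappa_meets
    (κ : Cardinal.{u}) (hκ : Cardinal.aleph0 ≤ κ)
    (X : Type u) [TopologicalSpace X] [T35Space X] :
    (∀ ι : Type u, Cardinal.mk ι = κ →
        ∀ f : X → ι → ℝ, Continuous f → IsCompact (Set.range f)) ↔
      ∀ G : Set (StoneCech X),
        (∃ (ι : Type u) (U : ι → Set (StoneCech X)),
          Cardinal.mk ι ≤ κ ∧ (∀ i, IsOpen (U i)) ∧ G = ⋂ i, U i) →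
        G.Nonempty →
        (G ∩ Set.range (stoneCechUnit : X → StoneCech X)).Nonempty := by
  constructor
  · -- forward direction
    rintro H G ⟨ι, U, hle, hopen, rfl⟩ ⟨p, hp⟩
    by_contra hcon
    rw [Set.not_nonempty_iff_eq_empty] at hcon
    have hfi : ∀ i, ∃ F : C(StoneCech X, ℝ), F p = 0 ∧ Set.EqOn F 1 (U i)ᶜ := by
      intro i
      obtain ⟨F, h0, h1, _⟩ := exists_continuous_zero_one_of_isClosed
        (isClosed_singleton (x := p)) (hopen i).isClosed_compl
        (Set.disjoint_singleton_left.mpr (by simpa using Set.mem_iInter.1 hp i))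
      exact ⟨F, h0 rfl, h1⟩
    choose F hF0 hF1 using hfi
    have hmk : Cardinal.mk (Quotient.out κ ⊕ ι) = κ := by
      rw [Cardinal.mk_sum]
      simp only [Cardinal.lift_id, Cardinal.mk_out]
      rw [Cardinal.add_eq_max hκ]
      exact max_eq_left hle
    set h : X → (Quotient.out κ ⊕ ι) → ℝ :=
      fun x => Sum.elim (fun _ => 0) (fun i => F i (stoneCechUnit x)) with hh
    have hcont : Continuous h := by
      apply continuous_pi
      rintro (j | i)
      · exact continuous_const
      · exact (F i).continuous.comp continuous_stoneCechUnit
    have hcomp := H _ hmk h hcont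
    set Φ : StoneCech X → (Quotient.out κ ⊕ ι) → ℝ :=
      fun y => Sum.elim (fun _ => 0) (fun i => F i y) with hΦ
    have hΦcont : Continuous Φ := by
      apply continuous_pi
      rintro (j | i)
      · exact continuous_const
      · exact (F i).continuous
    have hmem : Φ p ∈ Set.range h := by
      have hdense : p ∈ closure (Set.range (stoneCechUnit : X → StoneCech X)) :=
        denseRange_stoneCechUnit p
      have h1 : Φ p ∈ Φ '' closure (Set.range (stoneCechUnit : X → StoneCech X)) :=
        Set.mem_image_of_mem _ hdense
      have h2 := image_closure_subset_closure_image (s := Set.range (stoneCechUnit : X → StoneCech X)) hΦcont h1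
      rw [← Set.range_comp] at h2
      have h3 : Φ ∘ stoneCechUnit = h := rfl
      rw [h3, hcomp.isClosed.closure_eq] at h2
      exact h2
    obtain ⟨x, hx⟩ := hmem
    have hxG : stoneCechUnit x ∈ ⋂ i, U i := by
      apply Set.mem_iInter.2
      intro i
      by_contra hxi
      have e1 : F i (stoneCechUnit x) = F i p := congrFun hx (Sum.inr i)
      have e2 : F i (stoneCechUnit x) = 1 := hF1 i hxi
      rw [hF0 i] at e1
      rw [e1] at e2
      norm_num at e2
    exact absurd (Set.eq_empty_iff_forall_notMem.1 hcon (stoneCechUnit x))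
      (by exact fun hn => hn ⟨hxG, Set.mem_range_self x⟩)
  · -- backward direction
    intro H ι hι f hf
    set g : X → ι → ℝ := fun x i => eMap (f x i) with hg
    have hg' : Continuous fun x => (fun i => (⟨g x i, eMap_mem _⟩ : Set.Icc (-1:ℝ) 1)) := by
      apply continuous_pi
      intro i
      exact Continuous.subtype_mk (eMap_continuous.comp ((continuous_apply i).comp hf)) _
    set G' := stoneCechExtend hg' with hG'
    have hext : G' ∘ stoneCechUnit = fun x => (fun i => (⟨g x i, eMap_mem _⟩ : Set.Icc (-1:ℝ) 1)) :=
      stoneCechExtend_extends hg'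
    set Gr : StoneCech X → ι → ℝ := fun y i => (G' y i : ℝ) with hGr
    have hGrcont : Continuous Gr := by
      apply continuous_pi
      intro i
      exact continuous_subtype_val.comp ((continuous_apply i).comp (continuous_stoneCechExtend hg'))
    have hGru : ∀ x, Gr (stoneCechUnit x) = g x := by
      intro x
      funext i
      have := congrFun hext x
      simp only [Function.comp] at this
      rw [hGr]
      simp only [this]
    have key : ∀ y, ∃ x, g x = Gr y := by
      intro y
      set U : ι × ULift.{u} ℕ → Set (StoneCech X) :=
        fun q => {z | |Gr z q.1 - Gr y q.1| < 1 / (q.2.down + 1)} with hU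
      have hcard : Cardinal.mk (ι × ULift.{u} ℕ) ≤ κ := by
        rw [Cardinal.mk_prod]
        simp only [Cardinal.lift_id, Cardinal.mk_uLift, Cardinal.mk_nat,
          Cardinal.lift_aleph0, hι]
        exact le_trans (mul_le_mul_right hκ κ) (le_of_eq (Cardinal.mul_eq_self hκ))
      have hUopen : ∀ q, IsOpen (U q) := by
        intro q
        have hc : Continuous fun z => |Gr z q.1 - Gr y q.1| :=
          (((continuous_apply q.1).comp hGrcont).sub continuous_const).abs
        exact isOpen_lt hc continuous_const
      have hyA : y ∈ ⋂ q, U q := by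
        apply Set.mem_iInter.2
        intro q
        simp only [hU, Set.mem_setOf_eq, sub_self, abs_zero]
        positivity
      obtain ⟨z, hzA, x, rfl⟩ := H (⋂ q, U q) ⟨_, U, hcard, hUopen, rfl⟩ ⟨y, hyA⟩
      refine ⟨x, funext fun i => ?_⟩
      have hall : ∀ n : ℕ, |Gr (stoneCechUnit x) i - Gr y i| < 1 / (n + 1) := by
        intro n
        exact Set.mem_iInter.1 hzA (i, ⟨n⟩)
      have hle0 : |Gr (stoneCechUnit x) i - Gr y i| ≤ 0 := by
        by_contra hc
        push_neg at hc
        obtain ⟨n, hn⟩ := exists_nat_one_div_lt hc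
        exact absurd (hall n) (not_lt.2 hn.le)
      have := abs_nonpos_iff.1 hle0
      have heq : Gr (stoneCechUnit x) i = Gr y i := by linarith [sub_eq_zero.1 this]
      rw [← heq, hGru x]
    have hrange : Set.range g = Set.range Gr := by
      ext v
      constructor
      · rintro ⟨x, rfl⟩
        exact ⟨stoneCechUnit x, hGru x⟩
      · rintro ⟨y, rfl⟩
        exact key y
    have hcompact : IsCompact (Set.range Gr) := isCompact_range hGrcont
    have habs : ∀ v ∈ Set.range Gr, ∀ i, |v i| < 1 := by
      rw [← hrange]
      rintro _ ⟨x, rfl⟩ i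
      exact eMap_abs_lt _
    set m : (ι → ℝ) → ι → ℝ := fun v i => psiMap (v i) with hm
    have hfm : Set.range f = m '' Set.range Gr := by
      have hfe : f = m ∘ g := funext fun x => funext fun i => (psi_eMap (f x i)).symm
      rw [hfe, Set.range_comp, hrange]
    have hmcont : ContinuousOn m (Set.range Gr) := by
      intro v hv
      apply ContinuousAt.continuousWithinAt
      apply continuousAt_pi.2
      intro i
      show ContinuousAt (psiMap ∘ fun w : ι → ℝ => w i) v
      exact ContinuousAt.comp (x := v) (f := fun w : ι → ℝ => w i)
        (psi_continuousAt (habs v hv i)) (continuous_apply i).continuousAt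
    rw [hfm]
    exact hcompact.image_of_continuousOn hmcont
end

section
/- A Tychonoff space X is ω-pseudocompact if and only if it is pseudocompact, i.e., every continuous real-valued function on X is bounded. -/
/-- A Tychonoff space is `ω`-pseudocompact (every continuous map into `ℝ^ℕ` has compact
image) iff it is pseudocompact (every continuous real-valued function is bounded). -/
theorem omegaPseudocompact_iff_pseudocompact
    (X : Type*) [TopologicalSpace X] [T35Space X] :
    (∀ f : X → ℕ → ℝ, Continuous f → IsCompact (Set.range f)) ↔
      (∀ f : X → ℝ, Continuous f → ∃ M : ℝ, ∀ x, |f x| ≤ M) := by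
  constructor
  · intro h g hg
    have hc : IsCompact (Set.range fun x : X => (fun _ : ℕ => g x)) :=
      h _ (continuous_pi fun _ => hg)
    have hc2 : IsCompact ((fun p : ℕ → ℝ => p 0) '' (Set.range fun x : X => (fun _ : ℕ => g x))) :=
      hc.image (continuous_apply 0)
    have hrange : ((fun p : ℕ → ℝ => p 0) '' (Set.range fun x : X => (fun _ : ℕ => g x)))
        = Set.range g := by
      ext y
      simp [Set.mem_image, Set.mem_range]
    rw [hrange] at hc2
    obtain ⟨r, hr⟩ := (Metric.isBounded_iff_subset_closedBall 0).mp hc2.isBounded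
    refine ⟨r, fun x => ?_⟩
    have := hr ⟨x, rfl⟩
    simpa [Real.dist_eq] using this
  · intro hp f hf
    letI : MetricSpace (ℕ → ℝ) := TopologicalSpace.metrizableSpaceMetric _
    choose M hM using fun n => hp (fun x => f x n) ((continuous_apply n).comp hf)
    have hsub : Set.range f ⊆ Set.pi Set.univ (fun n => Set.Icc (-(M n)) (M n)) := by
      rintro _ ⟨x, rfl⟩ n _
      exact abs_le.mp (hM n x)
    have hK : IsCompact (Set.pi Set.univ (fun n => Set.Icc (-(M n)) (M n))) :=
      isCompact_univ_pi fun n => isCompact_Icc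
    have hclosed : IsClosed (Set.range f) := by
      rw [← closure_subset_iff_isClosed]
      intro y hy
      by_contra hyn
      have hd : ∀ x : X, dist (f x) y ≠ 0 := by
        intro x hx
        exact hyn ⟨x, by rwa [dist_eq_zero] at hx⟩
      have hgc : Continuous fun x : X => (dist (f x) y)⁻¹ :=
        ((continuous_dist.comp (hf.prodMk continuous_const))).inv₀ hd
      obtain ⟨B, hB⟩ := hp _ hgc
      have hε : (0:ℝ) < (max B 0 + 1)⁻¹ := by positivity
      obtain ⟨b, ⟨x, rfl⟩, hb⟩ := Metric.mem_closure_iff.mp hy _ hε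
      have hdpos : 0 < dist (f x) y := lt_of_le_of_ne dist_nonneg (Ne.symm (hd x))
      have h1 : max B 0 + 1 < (dist (f x) y)⁻¹ := by
        rw [dist_comm] at hb
        have := (inv_strictAnti₀ hdpos hb)
        simpa using this
      have h2 : (dist (f x) y)⁻¹ ≤ B := (le_abs_self _).trans (hB x)
      have : B ≤ max B 0 := le_max_left _ _
      linarith
    exact hK.of_isClosed_subset hclosed hsub
end

section
/- Let φ : C*_p(X) → C*_p(Y) be a uniformly continuous surjection (pointwise-convergence uniformities). For each y ∈ Y there exist n ∈ ℕ and a nonempty finite set F ⊆ X such that for all f, g ∈ C*(X), if |f(x) − g(x)| < 1 for every x ∈ F then |φ(f)(y) − φ(g)(y)| ≤ n. -/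
open Uniformity Filter


/-- `C*(X)`: bounded continuous real-valued functions on `X`; as a subtype of `X → ℝ` it
inherits the uniformity (and topology) of pointwise convergence, giving `C*_p(X)`. -/
abbrev Cstar (X : Type*) [TopologicalSpace X] : Type _ :=
  {f : X → ℝ // Continuous f ∧ ∃ M : ℝ, ∀ x, |f x| ≤ M}

/-- If `φ : C*_p(X) → C*_p(Y)` is a uniformly continuous surjection, then for each `y ∈ Y`
there are `n ∈ ℕ` and a nonempty finite `F ⊆ X` such that `|f − g| < 1` on `F` implies
`|φf(y) − φg(y)| ≤ n`. -/
theorem exists_finite_support_bound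
    {X Y : Type*} [TopologicalSpace X] [T35Space X] [TopologicalSpace Y] [T35Space Y]
    (φ : Cstar X → Cstar Y) (hφ : UniformContinuous φ) (hsurj : Function.Surjective φ)
    (y : Y) :
    ∃ (n : ℕ) (F : Finset X), F.Nonempty ∧
      ∀ f g : Cstar X, (∀ x ∈ F, |f.1 x - g.1 x| < 1) →
        |(φ f).1 y - (φ g).1 y| ≤ (n : ℝ) := by
  classical
  -- X is nonempty
  have hXne : Nonempty X := by
    by_contra hX
    rw [not_nonempty_iff] at hX
    obtain ⟨f0, hf0⟩ := hsurj ⟨fun _ => (0:ℝ), continuous_const, 1, by norm_num⟩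
    obtain ⟨f1, hf1⟩ := hsurj ⟨fun _ => (1:ℝ), continuous_const, 1, by norm_num⟩
    have hfe : f0 = f1 := Subtype.ext (funext fun x => (hX.false x).elim)
    have h01 : φ f0 = φ f1 := by rw [hfe]
    rw [hf0, hf1] at h01
    have := congrArg (fun u : Cstar Y => u.1 y) h01
    norm_num at this
  obtain ⟨x₀⟩ := hXne
  -- the basic entourage at y in Cstar Y
  have hV : {p : Cstar Y × Cstar Y | dist (p.1.1 y) (p.2.1 y) < 1} ∈ 𝓤 (Cstar Y) := by
    rw [uniformity_subtype]
    refine Filter.mem_comap.2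
      ⟨{q : (Y → ℝ) × (Y → ℝ) | dist (q.1 y) (q.2 y) < 1}, ?_, fun p hp => hp⟩
    rw [Pi.uniformity]
    exact Filter.mem_iInf_of_mem y (Filter.preimage_mem_comap (Metric.dist_mem_uniformity one_pos))
  have hW := hφ hV
  rw [uniformity_subtype] at hW
  obtain ⟨U, hU, hUsub⟩ := Filter.mem_comap.1 hW
  rw [Pi.uniformity] at hU
  obtain ⟨I, hIfin, V, hVmem, hVeq⟩ := Filter.mem_iInf.1 hU
  have hδ : ∀ i : I, ∃ δ > (0:ℝ), ∀ p : (X → ℝ) × (X → ℝ),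
      dist (p.1 i) (p.2 i) < δ → p ∈ V i := by
    intro i
    obtain ⟨t, ht, hts⟩ := Filter.mem_comap.1 (hVmem i)
    obtain ⟨ε, hε0, hεt⟩ := Metric.mem_uniformity_dist.1 ht
    exact ⟨ε, hε0, fun p hp => hts (hεt hp)⟩
  choose δ hδ0 hδV using hδ
  haveI : Fintype I := hIfin.fintype
  set F : Finset X := insert x₀ hIfin.toFinset with hFdef
  -- the minimal δ, together with 1
  set s : Finset ℝ := insert 1 (Finset.univ.image δ) with hsdef
  have hsne : s.Nonempty := ⟨1, Finset.mem_insert_self _ _⟩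
  set δm : ℝ := s.min' hsne with hδm
  have hδm0 : 0 < δm := by
    have hmem : δm ∈ s := Finset.min'_mem s hsne
    rcases Finset.mem_insert.1 hmem with h | h
    · rw [h]; norm_num
    · obtain ⟨i, -, hi⟩ := Finset.mem_image.1 h
      rw [← hi]; exact hδ0 i
  have hδm1 : δm ≤ 1 := Finset.min'_le s 1 (Finset.mem_insert_self _ _)
  have hδmi : ∀ i : I, δm ≤ δ i := fun i =>
    Finset.min'_le s (δ i) (Finset.mem_insert_of_mem (Finset.mem_image_of_mem δ (Finset.mem_univ i)))
  -- key property
  have key : ∀ f g : Cstar X, (∀ x ∈ F, |f.1 x - g.1 x| < δm) →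
      dist ((φ f).1 y) ((φ g).1 y) < 1 := by
    intro f g hfg
    have hmem : (f.1, g.1) ∈ U := by
      rw [hVeq]
      refine Set.mem_iInter.2 fun i => ?_
      refine hδV i _ ?_
      rw [Real.dist_eq]
      have hiF : (i : X) ∈ F := Finset.mem_insert_of_mem (hIfin.mem_toFinset.2 i.2)
      exact lt_of_lt_of_le (hfg i hiF) (hδmi i)
    have hmem' : (f, g) ∈ (fun q : Cstar X × Cstar X => (q.1.1, q.2.1)) ⁻¹' U := hmem
    exact hUsub hmem'
  -- choose N
  set N : ℕ := ⌈1 / δm⌉₊ with hN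
  have hN1 : 1 ≤ N := by
    have : (1:ℝ) ≤ 1 / δm := by
      rw [le_div_iff₀ hδm0]; linarith
    exact Nat.one_le_iff_ne_zero.2 (by
      intro h
      rw [hN] at h
      have := Nat.ceil_eq_zero.1 h
      linarith)
  have hNpos : (0:ℝ) < N := by exact_mod_cast Nat.lt_of_lt_of_le Nat.zero_lt_one hN1
  have hNδ : (1:ℝ) / N ≤ δm := by
    rw [div_le_iff₀ hNpos]
    have h1 : (1:ℝ) / δm ≤ N := Nat.le_ceil _
    calc (1:ℝ) = δm * (1 / δm) := by field_simp
    _ ≤ δm * N := by nlinarith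
  refine ⟨N, F, ⟨x₀, Finset.mem_insert_self _ _⟩, fun f g hfg => ?_⟩
  obtain ⟨Mf, hMf⟩ := f.2.2
  obtain ⟨Mg, hMg⟩ := g.2.2
  -- the chain of functions
  have hbound : ∀ (c : ℝ), 0 ≤ c → ∀ x, |f.1 x + c * (g.1 x - f.1 x)| ≤ Mf + c * (Mg + Mf) := by
    intro c hc x
    have h1 := abs_le.1 (hMf x)
    have h2 := abs_le.1 (hMg x)
    rw [abs_le]
    constructor <;> nlinarith [mul_le_mul_of_nonneg_left h2.1 hc, mul_le_mul_of_nonneg_left h2.2 hc,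
      mul_le_mul_of_nonneg_left h1.1 hc, mul_le_mul_of_nonneg_left h1.2 hc]
  have hcnn : ∀ k : ℕ, (0:ℝ) ≤ (k : ℝ) / N := fun k =>
    div_nonneg (Nat.cast_nonneg k) (le_of_lt hNpos)
  set h : ℕ → Cstar X := fun k =>
    ⟨fun x => f.1 x + ((k : ℝ) / N) * (g.1 x - f.1 x),
      f.2.1.add (continuous_const.mul (g.2.1.sub f.2.1)),
      ⟨Mf + ((k : ℝ) / N) * (Mg + Mf), hbound _ (hcnn k) ⟩⟩ with hh
  have h0 : h 0 = f := Subtype.ext (funext fun x => by simp [hh])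
  have hNg : h N = g := Subtype.ext (funext fun x => by
    simp only [hh]
    rw [div_self (ne_of_gt hNpos)]
    ring)
  have hstep : ∀ k : ℕ, dist ((φ (h k)).1 y) ((φ (h (k + 1))).1 y) < 1 := by
    intro k
    refine key _ _ fun x hx => ?_
    simp only [hh]
    have : f.1 x + ((k : ℝ) / N) * (g.1 x - f.1 x)
        - (f.1 x + (((k : ℝ) + 1) / N) * (g.1 x - f.1 x))
        = -(1 / N) * (g.1 x - f.1 x) := by ring
    rw [Nat.cast_add, Nat.cast_one, this, abs_mul, abs_neg, abs_of_pos (by positivity : (0:ℝ) < 1 / N)]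
    have hgf : |g.1 x - f.1 x| < 1 := by
      rw [abs_sub_comm]; exact hfg x hx
    calc 1 / (N:ℝ) * |g.1 x - f.1 x| < 1 / N * 1 := by
          exact mul_lt_mul_of_pos_left hgf (by positivity)
    _ = 1 / N := mul_one _
    _ ≤ δm := hNδ
  have hchain : dist ((φ (h 0)).1 y) ((φ (h N)).1 y) ≤ ∑ k ∈ Finset.range N,
      dist ((φ (h k)).1 y) ((φ (h (k + 1))).1 y) :=
    dist_le_range_sum_dist (fun k => (φ (h k)).1 y) N
  have hsum : ∑ k ∈ Finset.range N, dist ((φ (h k)).1 y) ((φ (h (k + 1))).1 y) ≤ N := by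
    calc ∑ k ∈ Finset.range N, dist ((φ (h k)).1 y) ((φ (h (k + 1))).1 y)
        ≤ ∑ _k ∈ Finset.range N, (1:ℝ) :=
          Finset.sum_le_sum fun k _ => le_of_lt (hstep k)
    _ = N := by simp
  rw [← Real.dist_eq, ← h0, ← hNg]
  exact le_trans hchain hsum
end

section
/- With the notation a(y,K) as above, for each pair of positive integers n, m the set Z = { (y, F) ∈ Y_n × [βX]^{≤m} : a(y, F) ≤ n } is closed in Y_n × [βX]^{≤m}, where [βX]^{≤m} is the space of nonempty subsets of βX with at most m elements endowed with the Vietoris topology; consequently the set Y_{n,m} = { y ∈ βY : there exists F ∈ [βX]^{≤m} with a(y,F) ≤ n } is compact. -/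
open scoped ENNReal

/-- Given extension operators `eX`, `eY` to the Čech–Stone compactifications and a map
`φ : C*(X) → C*(Y)`, `aFn eX eY φ y K` is
`sup { |φ(f)~(y) − φ(g)~(y)| : f, g ∈ C*(X), |f~ − g~| < 1 on K }` (valued in `ℝ≥0∞`). -/
noncomputable def aFn {X Y : Type*} [TopologicalSpace X] [TopologicalSpace Y]
    (eX : Cstar X → C(StoneCech X, ℝ)) (eY : Cstar Y → C(StoneCech Y, ℝ))
    (φ : Cstar X → Cstar Y) (y : StoneCech Y) (K : Set (StoneCech X)) : ℝ≥0∞ :=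
  ⨆ (p : Cstar X × Cstar X) (_ : ∀ x ∈ K, |eX p.1 x - eX p.2 x| < 1),
    ENNReal.ofReal |eY (φ p.1) y - eY (φ p.2) y|

/-- `[Z]^{≤m}`: the nonempty subsets of `Z` with at most `m` elements. -/
abbrev SmallSets (Z : Type*) (m : ℕ) : Type _ :=
  {F : Set Z // F.Nonempty ∧ F.Finite ∧ F.ncard ≤ m}

/-- The Vietoris topology on `[Z]^{≤m}`, generated by the sets `{F : F ⊆ U}` and
`{F : F ∩ U ≠ ∅}` for `U` open in `Z`. -/
def vietoris (Z : Type*) [TopologicalSpace Z] (m : ℕ) : TopologicalSpace (SmallSets Z m) :=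
  TopologicalSpace.generateFrom
    {s | ∃ U : Set Z, IsOpen U ∧
      (s = {F : SmallSets Z m | F.1 ⊆ U} ∨ s = {F : SmallSets Z m | (F.1 ∩ U).Nonempty})}

section MyAux

variable {X Y : Type*} [TopologicalSpace X] [TopologicalSpace Y]

lemma my_aFn_univ_le (eX : Cstar X → C(StoneCech X, ℝ)) (eY : Cstar Y → C(StoneCech Y, ℝ))
    (φ : Cstar X → Cstar Y) (y : StoneCech Y) (F : Set (StoneCech X)) :
    aFn eX eY φ y Set.univ ≤ aFn eX eY φ y F := by
  refine iSup_mono fun p => ?_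
  exact iSup_le fun h => le_iSup_of_le (fun x _ => h x (Set.mem_univ x)) le_rfl

lemma my_sublevel_closed {W : Type*} [TopologicalSpace W]
    (eX : Cstar X → C(StoneCech X, ℝ)) (eY : Cstar Y → C(StoneCech Y, ℝ))
    (φ : Cstar X → Cstar Y) (u : W → StoneCech Y) (hu : Continuous u)
    (K : W → Set (StoneCech X))
    (hK : ∀ U : Set (StoneCech X), IsOpen U → IsOpen {w | K w ⊆ U}) (n : ℝ≥0∞) :
    IsClosed {w | aFn eX eY φ (u w) (K w) ≤ n} := by
  rw [← isOpen_compl_iff]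
  have hEq : {w | aFn eX eY φ (u w) (K w) ≤ n}ᶜ =
      ⋃ p : Cstar X × Cstar X,
        ({w | K w ⊆ {x | |eX p.1 x - eX p.2 x| < 1}} ∩
         {w | (n : ℝ≥0∞) < ENNReal.ofReal |eY (φ p.1) (u w) - eY (φ p.2) (u w)|}) := by
    ext w
    simp only [Set.mem_compl_iff, Set.mem_setOf_eq, not_le, aFn, lt_iSup_iff,
      Set.mem_iUnion, Set.mem_inter_iff, Set.subset_def]
    tauto
  rw [hEq]
  refine isOpen_iUnion fun p => ?_
  refine (hK _ ?_).inter ?_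
  · have : {x | |eX p.1 x - eX p.2 x| < 1} =
        (fun x => |eX p.1 x - eX p.2 x|) ⁻¹' Set.Iio 1 := rfl
    rw [this]
    exact (((eX p.1).continuous.sub (eX p.2).continuous).abs).isOpen_preimage _ isOpen_Iio
  · have : {w | (n : ℝ≥0∞) < ENNReal.ofReal |eY (φ p.1) (u w) - eY (φ p.2) (u w)|} =
        (fun w => ENNReal.ofReal |eY (φ p.1) (u w) - eY (φ p.2) (u w)|) ⁻¹' Set.Ioi n := rfl
    rw [this]
    exact (ENNReal.continuous_ofReal.comp
      ((((eY (φ p.1)).continuous.comp hu).sub ((eY (φ p.2)).continuous.comp hu)).abs)).isOpen_preimage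
      _ isOpen_Ioi

lemma my_smallSets_surj {Z : Type*} {m : ℕ} (hm : 0 < m) (F : SmallSets Z m) :
    ∃ f : Fin m → Z, Set.range f = F.1 := by
  obtain ⟨hne, hfin, hcard⟩ := F.2
  haveI := hfin.fintype
  set s : Finset Z := hfin.toFinset with hs
  have hkm : s.card ≤ m := by
    rwa [← Set.ncard_coe_finset, hfin.coe_toFinset]
  have hkpos : 0 < s.card := Finset.card_pos.mpr (by
    obtain ⟨a, ha⟩ := hne
    exact ⟨a, hfin.mem_toFinset.mpr ha⟩)
  set e := s.equivFin
  refine ⟨fun i => (e.symm ⟨i % s.card, Nat.mod_lt _ hkpos⟩ : Z), ?_⟩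
  apply Set.Subset.antisymm
  · rintro _ ⟨i, rfl⟩
    have := (e.symm ⟨i % s.card, Nat.mod_lt _ hkpos⟩).2
    rwa [← hfin.mem_toFinset]
  · intro a ha
    have ha' : a ∈ s := hfin.mem_toFinset.mpr ha
    set j := e ⟨a, ha'⟩
    refine ⟨⟨j, lt_of_lt_of_le j.2 hkm⟩, ?_⟩
    have : ((j : ℕ) % s.card) = (j : ℕ) := Nat.mod_eq_of_lt j.2
    simp only [this]
    have : (⟨(j : ℕ), j.2⟩ : Fin s.card) = j := rfl
    rw [this]
    simp [j]

lemma my_vietoris_compact (Z : Type*) [TopologicalSpace Z] [CompactSpace Z] (m : ℕ)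
    (hm : 0 < m) : @CompactSpace (SmallSets Z m) (vietoris Z m) := by
  letI : TopologicalSpace (SmallSets Z m) := vietoris Z m
  haveI : Nonempty (Fin m) := ⟨⟨0, hm⟩⟩
  classical
  have hcard : ∀ x : Fin m → Z, (Set.range x).ncard ≤ m := by
    intro x
    have h1 : Set.range x = ↑(Finset.univ.image x) := by simp
    rw [h1, Set.ncard_coe_finset]
    exact Finset.card_image_le.trans (by simp)
  set q : (Fin m → Z) → SmallSets Z m :=
    fun x => ⟨Set.range x, Set.range_nonempty x, Set.finite_range x, hcard x⟩ with hq
  have hqc : Continuous q := by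
    refine continuous_generateFrom_iff.mpr ?_
    rintro S ⟨U, hU, hcase | hcase⟩ <;> subst hcase
    · have : q ⁻¹' {F : SmallSets Z m | F.1 ⊆ U} = ⋂ i, (fun x : Fin m → Z => x i) ⁻¹' U := by
        ext x
        simp [hq, Set.range_subset_iff, Set.subset_def]
      rw [this]
      exact isOpen_iInter_of_finite fun i => hU.preimage (continuous_apply i)
    · have : q ⁻¹' {F : SmallSets Z m | (F.1 ∩ U).Nonempty} =
          ⋃ i, (fun x : Fin m → Z => x i) ⁻¹' U := by
        ext x
        simp only [hq, Set.mem_preimage, Set.mem_setOf_eq, Set.mem_iUnion]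
        constructor
        · rintro ⟨a, ⟨i, rfl⟩, haU⟩; exact ⟨i, haU⟩
        · rintro ⟨i, hi⟩; exact ⟨x i, ⟨i, rfl⟩, hi⟩
      rw [this]
      exact isOpen_iUnion fun i => hU.preimage (continuous_apply i)
  have hqs : Function.Surjective q := by
    intro F
    obtain ⟨f, hf⟩ := my_smallSets_surj hm F
    exact ⟨f, Subtype.ext hf⟩
  refine ⟨?_⟩
  rw [← hqs.range_eq]
  exact isCompact_range hqc

end MyAux

/-- The set `Z = {(y, F) ∈ Y_n × [βX]^{≤m} : a(y, F) ≤ n}` is closed in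
`Y_n × [βX]^{≤m}` (Vietoris topology on the hyperspace); consequently
`Y_{n,m} = { y ∈ βY : ∃ F ∈ [βX]^{≤m}, a(y,F) ≤ n }` is compact. -/
theorem Ynm_isCompact
    {X Y : Type*} [TopologicalSpace X] [T35Space X] [TopologicalSpace Y] [T35Space Y]
    (φ : Cstar X → Cstar Y) (hφ : UniformContinuous φ) (hsurj : Function.Surjective φ)
    (eX : Cstar X → C(StoneCech X, ℝ)) (heX : ∀ f x, eX f (stoneCechUnit x) = f.1 x)
    (eY : Cstar Y → C(StoneCech Y, ℝ)) (heY : ∀ g y, eY g (stoneCechUnit y) = g.1 y)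
    (n m : ℕ) (hn : 0 < n) (hm : 0 < m) :
    (letI : TopologicalSpace (SmallSets (StoneCech X) m) := vietoris (StoneCech X) m;
      IsClosed {p : {y : StoneCech Y // aFn eX eY φ y Set.univ ≤ (n : ℝ≥0∞)} ×
          SmallSets (StoneCech X) m | aFn eX eY φ p.1.1 p.2.1 ≤ (n : ℝ≥0∞)}) ∧
    IsCompact {y : StoneCech Y | ∃ F : Set (StoneCech X),
      F.Nonempty ∧ F.Finite ∧ F.ncard ≤ m ∧ aFn eX eY φ y F ≤ (n : ℝ≥0∞)} := by
  letI : TopologicalSpace (SmallSets (StoneCech X) m) := vietoris (StoneCech X) m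
  have part1 : IsClosed {p : {y : StoneCech Y // aFn eX eY φ y Set.univ ≤ (n : ℝ≥0∞)} ×
      SmallSets (StoneCech X) m | aFn eX eY φ p.1.1 p.2.1 ≤ (n : ℝ≥0∞)} := by
    refine my_sublevel_closed (W := {y : StoneCech Y // aFn eX eY φ y Set.univ ≤ (n : ℝ≥0∞)} ×
        SmallSets (StoneCech X) m) eX eY φ (fun p => p.1.1)
      (continuous_subtype_val.comp continuous_fst) (fun p => p.2.1) ?_ _
    intro U hU
    have h1 : {w : {y : StoneCech Y // aFn eX eY φ y Set.univ ≤ (n : ℝ≥0∞)} ×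
        SmallSets (StoneCech X) m | w.2.1 ⊆ U} =
        Prod.snd ⁻¹' {F : SmallSets (StoneCech X) m | F.1 ⊆ U} := rfl
    rw [h1]
    have h2 : IsOpen {F : SmallSets (StoneCech X) m | F.1 ⊆ U} :=
      TopologicalSpace.isOpen_generateFrom_of_mem ⟨U, hU, Or.inl rfl⟩
    exact h2.preimage continuous_snd
  refine ⟨part1, ?_⟩
  have hYn_closed : IsClosed {y : StoneCech Y | aFn eX eY φ y Set.univ ≤ (n : ℝ≥0∞)} := by
    refine my_sublevel_closed eX eY φ id continuous_id (fun _ => Set.univ) ?_ _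
    intro U hU
    by_cases h : (Set.univ : Set (StoneCech X)) ⊆ U <;> simp [h]
  haveI : CompactSpace {y : StoneCech Y // aFn eX eY φ y Set.univ ≤ (n : ℝ≥0∞)} :=
    isCompact_iff_compactSpace.mp hYn_closed.isCompact
  haveI : CompactSpace (SmallSets (StoneCech X) m) := my_vietoris_compact _ m hm
  have hZc : IsCompact {p : {y : StoneCech Y // aFn eX eY φ y Set.univ ≤ (n : ℝ≥0∞)} ×
      SmallSets (StoneCech X) m | aFn eX eY φ p.1.1 p.2.1 ≤ (n : ℝ≥0∞)} :=
    part1.isCompact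
  have himg := hZc.image (f := fun p => p.1.1)
    (continuous_subtype_val.comp continuous_fst)
  have hEq : {y : StoneCech Y | ∃ F : Set (StoneCech X),
      F.Nonempty ∧ F.Finite ∧ F.ncard ≤ m ∧ aFn eX eY φ y F ≤ (n : ℝ≥0∞)} =
      (fun p : {y : StoneCech Y // aFn eX eY φ y Set.univ ≤ (n : ℝ≥0∞)} ×
        SmallSets (StoneCech X) m => p.1.1) ''
      {p | aFn eX eY φ p.1.1 p.2.1 ≤ (n : ℝ≥0∞)} := by
    ext y
    constructor
    · rintro ⟨F, hne, hfin, hcard, hle⟩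
      exact ⟨(⟨y, (my_aFn_univ_le eX eY φ y F).trans hle⟩, ⟨F, hne, hfin, hcard⟩), hle, rfl⟩
    · rintro ⟨⟨y', F⟩, hle, rfl⟩
      exact ⟨F.1, F.2.1, F.2.2.1, F.2.2.2, hle⟩
  rw [hEq]
  exact himg
end

section
/- Let φ : C*_p(X) → C*_p(Y) be a uniformly continuous surjection and suppose Y is pseudocompact. Then βY = ⋃_{n,m ∈ ℕ} Y_{n,m}, where Y_{n,m} = { y ∈ βY : there is a set F ⊆ βX with |F| ≤ m, F ≠ ∅, and a(y,F) ≤ n }. -/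
open scoped ENNReal

/-- Basic entourages of the pointwise uniformity on `ι → ℝ`. -/
lemma pi_uniformity_basic {ι : Type*} {T : Set ((ι → ℝ) × (ι → ℝ))}
    (hT : T ∈ uniformity (ι → ℝ)) :
    ∃ (S : Finset ι) (ε : ℝ), 0 < ε ∧
      ∀ u v : ι → ℝ, (∀ x ∈ S, |u x - v x| < ε) → (u, v) ∈ T := by
  rw [Pi.uniformity] at hT
  rcases Filter.mem_iInf'.mp hT with ⟨I, Ifin, V, hV, -, hEq, -⟩
  have hW : ∀ i : ι, ∃ δ : ℝ, 0 < δ ∧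
      ∀ p : (ι → ℝ) × (ι → ℝ), dist (p.1 i) (p.2 i) < δ → p ∈ V i := by
    intro i
    rcases (Filter.mem_comap.mp (hV i)) with ⟨W, hWmem, hWsub⟩
    rcases Metric.mem_uniformity_dist.mp hWmem with ⟨δ, hδ, hball⟩
    exact ⟨δ, hδ, fun p hp => hWsub (hball hp)⟩
  choose δ hδpos hδ using hW
  classical
  set S := Ifin.toFinset with hS
  by_cases hSne : S.Nonempty
  · refine ⟨S, S.inf' hSne δ, ?_, ?_⟩
    · exact (Finset.lt_inf'_iff hSne).2 fun i _ => hδpos i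
    · intro u v huv
      rw [hEq]
      refine Set.mem_iInter₂.2 fun i hi => ?_
      have hiS : i ∈ S := Ifin.mem_toFinset.2 hi
      have : |u i - v i| < δ i :=
        lt_of_lt_of_le (huv i hiS) (Finset.inf'_le δ hiS)
      exact hδ i (u, v) (by simpa [Real.dist_eq] using this)
  · refine ⟨S, 1, one_pos, fun u v _ => ?_⟩
    rw [hEq]
    refine Set.mem_iInter₂.2 fun i hi => ?_
    exact (hSne ⟨i, Ifin.mem_toFinset.2 hi⟩).elim

/-- A nonempty finite set of cardinality at most `k` is the range of a `k`-tuple. -/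
lemma exists_range_eq_of_ncard_le {α : Type*} {F : Set α} (hne : F.Nonempty)
    (hfin : F.Finite) {k : ℕ} (hk : F.ncard ≤ k) :
    ∃ σ : Fin k → α, Set.range σ = F := by
  classical
  obtain ⟨a, ha⟩ := hne
  set t := hfin.toFinset with ht
  have hcard : t.card = F.ncard := by
    rw [ht]; exact (Set.ncard_eq_toFinset_card F hfin).symm
  set L := t.toList with hL
  have hlen : L.length = t.card := Finset.length_toList t
  refine ⟨fun i => L.getD i a, ?_⟩
  ext x
  constructor
  · rintro ⟨i, rfl⟩
    show L.getD (i:ℕ) a ∈ F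
    by_cases hi : (i : ℕ) < L.length
    · rw [List.getD_eq_getElem _ _ hi]
      have h1 : L[(i:ℕ)] ∈ L := List.getElem_mem hi
      have h2 : L[(i:ℕ)] ∈ t := Finset.mem_toList.mp h1
      exact hfin.mem_toFinset.mp h2
    · rw [List.getD_eq_default _ _ (not_lt.mp hi)]
      exact ha
  · intro hx
    have hxL : x ∈ L := Finset.mem_toList.mpr (hfin.mem_toFinset.mpr hx)
    obtain ⟨j, hj, hjx⟩ := List.getElem_of_mem hxL
    have hjk : j < k := lt_of_lt_of_le hj (by rw [hlen, hcard]; exact hk)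
    refine ⟨⟨j, hjk⟩, ?_⟩
    show L.getD j a = x
    rw [List.getD_eq_getElem _ _ hj, hjx]

section Main

variable {X Y : Type*} [TopologicalSpace X] [TopologicalSpace Y]

/-- Step A: every point of (the image of) `Y` lies in some `Y_{n,m}`. -/
lemma stepA (φ : Cstar X → Cstar Y) (hφ : UniformContinuous φ)
    (eX : Cstar X → C(StoneCech X, ℝ)) (heX : ∀ f x, eX f (stoneCechUnit x) = f.1 x)
    (eY : Cstar Y → C(StoneCech Y, ℝ)) (heY : ∀ g y, eY g (stoneCechUnit y) = g.1 y)
    (x₀ : X) (y₀ : Y) :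
    ∃ (n m : ℕ) (F : Set (StoneCech X)), F.Nonempty ∧ F.Finite ∧ F.ncard ≤ m ∧
      aFn eX eY φ (stoneCechUnit y₀) F ≤ (n : ℝ≥0∞) := by
  classical
  set ψ : Cstar X → ℝ := fun f => (φ f).1 y₀ with hψdef
  have hψ : UniformContinuous ψ := by
    have h1 : UniformContinuous fun u : Y → ℝ => u y₀ :=
      Pi.uniformContinuous_proj (fun _ : Y => ℝ) y₀
    have h2 : UniformContinuous fun f : Cstar Y => f.1 y₀ :=
      h1.comp uniformContinuous_subtype_val
    exact h2.comp hφ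
  have hU : {p : Cstar X × Cstar X | dist (ψ p.1) (ψ p.2) < 1} ∈ uniformity (Cstar X) :=
    hψ (Metric.dist_mem_uniformity one_pos)
  rw [uniformity_subtype] at hU
  obtain ⟨T, hT, hTsub⟩ := Filter.mem_comap.mp hU
  obtain ⟨S, ε, hε, hbasic⟩ := pi_uniformity_basic hT
  obtain ⟨k₀, hk₀⟩ := exists_nat_ge (1 / ε)
  set k : ℕ := max k₀ 1 with hkdef
  have hk1 : 1 ≤ k := le_max_right _ _
  have hkpos : (0 : ℝ) < k := by exact_mod_cast lt_of_lt_of_le one_pos hk1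
  have hkne : (k : ℝ) ≠ 0 := ne_of_gt hkpos
  have hkε : 1 / (k : ℝ) ≤ ε := by
    have h1 : 1 / ε ≤ (k : ℝ) :=
      le_trans hk₀ (by exact_mod_cast le_max_left k₀ 1)
    rw [div_le_iff₀ hkpos]
    rw [div_le_iff₀ hε] at h1
    nlinarith
  -- the chaining estimate
  have key : ∀ f g : Cstar X, (∀ x ∈ S, |f.1 x - g.1 x| < 1) → |ψ f - ψ g| ≤ (k : ℝ) := by
    intro f g hfg
    obtain ⟨hfc, Mf, hMf⟩ := f.2
    obtain ⟨hgc, Mg, hMg⟩ := g.2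
    set c : ℕ → Cstar X := fun i =>
      ⟨fun x => f.1 x + ((i : ℝ) / k) * (g.1 x - f.1 x),
        ⟨hfc.add (continuous_const.mul (hgc.sub hfc)),
          Mf + ((i : ℝ) / k) * (Mg + Mf), fun x => by
            have h1 := hMf x
            have h2 := hMg x
            have h3 : (0 : ℝ) ≤ (i : ℝ) / (k : ℝ) := by positivity
            have h4 : |((i : ℝ) / k) * (g.1 x - f.1 x)|
                = ((i : ℝ) / k) * |g.1 x - f.1 x| := by
              rw [abs_mul, abs_of_nonneg h3]
            have h5 : |g.1 x - f.1 x| ≤ Mg + Mf :=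
              (abs_sub (g.1 x) (f.1 x)).trans (by linarith)
            calc |f.1 x + ((i : ℝ) / k) * (g.1 x - f.1 x)|
                ≤ |f.1 x| + |((i : ℝ) / k) * (g.1 x - f.1 x)| := abs_add_le _ _
              _ ≤ Mf + ((i : ℝ) / k) * (Mg + Mf) := by
                  rw [h4]
                  exact add_le_add h1 (mul_le_mul_of_nonneg_left h5 h3)⟩⟩ with hcdef
    have hc0 : c 0 = f := Subtype.ext (funext fun x => by simp [hcdef])
    have hck : c k = g := Subtype.ext (funext fun x => by
      show f.1 x + ((k : ℝ) / k) * (g.1 x - f.1 x) = g.1 x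
      rw [div_self hkne]; ring)
    have hstep : ∀ i : ℕ, dist (ψ (c i)) (ψ (c (i + 1))) < 1 := by
      intro i
      have hmem : ((c i).1, (c (i + 1)).1) ∈ T := by
        apply hbasic
        intro x hx
        have hdiff : (c i).1 x - (c (i + 1)).1 x = -((1 : ℝ) / k) * (g.1 x - f.1 x) := by
          show (f.1 x + ((i : ℝ) / k) * (g.1 x - f.1 x))
              - (f.1 x + (((i : ℕ) + 1 : ℕ) : ℝ) / k * (g.1 x - f.1 x))
              = -((1 : ℝ) / k) * (g.1 x - f.1 x)
          push_cast
          field_simp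
          ring
        rw [hdiff, abs_mul, abs_neg, abs_of_nonneg (by positivity : (0:ℝ) ≤ 1 / (k:ℝ))]
        have h6 : |g.1 x - f.1 x| < 1 := by
          have := hfg x hx
          rwa [abs_sub_comm] at this
        calc (1 / (k : ℝ)) * |g.1 x - f.1 x| < (1 / (k : ℝ)) * 1 := by
              apply mul_lt_mul_of_pos_left h6 (by positivity)
          _ ≤ ε := by rw [mul_one]; exact hkε
      exact hTsub (show (c i, c (i + 1)) ∈ _ from hmem)
    have hsum : dist (ψ (c 0)) (ψ (c k)) ≤
        ∑ i ∈ Finset.range k, dist (ψ (c i)) (ψ (c (i + 1))) :=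
      dist_le_range_sum_dist (fun i => ψ (c i)) k
    rw [hc0, hck] at hsum
    have hsum2 : ∑ i ∈ Finset.range k, dist (ψ (c i)) (ψ (c (i + 1)))
        ≤ ∑ _i ∈ Finset.range k, (1 : ℝ) :=
      Finset.sum_le_sum fun i _ => le_of_lt (hstep i)
    rw [Finset.sum_const, Finset.card_range, nsmul_eq_mul, mul_one] at hsum2
    calc |ψ f - ψ g| = dist (ψ f) (ψ g) := (Real.dist_eq _ _).symm
      _ ≤ (k : ℝ) := le_trans hsum hsum2
  -- assemble
  refine ⟨k, S.card + 1, stoneCechUnit '' (insert x₀ (S : Set X)), ?_, ?_, ?_, ?_⟩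
  · exact ⟨stoneCechUnit x₀, Set.mem_image_of_mem _ (Set.mem_insert x₀ _)⟩
  · exact ((S.finite_toSet.insert x₀)).image _
  · calc (stoneCechUnit '' (insert x₀ (S : Set X))).ncard
        ≤ (insert x₀ (S : Set X)).ncard :=
          Set.ncard_image_le (S.finite_toSet.insert x₀)
      _ ≤ (S : Set X).ncard + 1 := Set.ncard_insert_le _ _
      _ = S.card + 1 := by rw [Set.ncard_coe_finset]
  · rw [aFn]
    refine iSup₂_le fun p hp => ?_
    have hS : ∀ x ∈ S, |p.1.1 x - p.2.1 x| < 1 := by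
      intro x hx
      have := hp (stoneCechUnit x)
        (Set.mem_image_of_mem _ (Set.mem_insert_of_mem _ hx))
      rwa [heX, heX] at this
    have hkey := key p.1 p.2 hS
    rw [heY, heY]
    calc ENNReal.ofReal |(φ p.1).1 y₀ - (φ p.2).1 y₀|
        ≤ ENNReal.ofReal (k : ℝ) := ENNReal.ofReal_le_ofReal hkey
      _ = (k : ℝ≥0∞) := ENNReal.ofReal_natCast k

/-- Step B: each `Z k = Y_{k,k}` is closed in `βY`. -/
lemma stepB (φ : Cstar X → Cstar Y)
    (eX : Cstar X → C(StoneCech X, ℝ)) (eY : Cstar Y → C(StoneCech Y, ℝ)) (k : ℕ) :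
    IsClosed {z : StoneCech Y | ∃ F : Set (StoneCech X),
      F.Nonempty ∧ F.Finite ∧ F.ncard ≤ k ∧ aFn eX eY φ z F ≤ (k : ℝ≥0∞)} := by
  classical
  rcases Nat.eq_zero_or_pos k with hk0 | hkpos
  · subst hk0
    have : {z : StoneCech Y | ∃ F : Set (StoneCech X),
        F.Nonempty ∧ F.Finite ∧ F.ncard ≤ 0 ∧ aFn eX eY φ z F ≤ ((0:ℕ) : ℝ≥0∞)} = ∅ := by
      refine Set.eq_empty_iff_forall_notMem.mpr fun z ⟨F, h1, h2, h3, _⟩ => ?_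
      exact h1.ne_empty ((Set.ncard_eq_zero h2).mp (Nat.le_zero.mp h3))
    rw [this]; exact isClosed_empty
  · set C : Set (StoneCech Y × (Fin k → StoneCech X)) :=
      {p | ∀ f g : Cstar X, (∀ i, |eX f (p.2 i) - eX g (p.2 i)| < 1) →
        |eY (φ f) p.1 - eY (φ g) p.1| ≤ (k : ℝ)} with hCdef
    have hCclosed : IsClosed C := by
      have hCeq : C = ⋂ (f : Cstar X) (g : Cstar X),
          ({p : StoneCech Y × (Fin k → StoneCech X) |
              ∃ i, 1 ≤ |eX f (p.2 i) - eX g (p.2 i)|} ∪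
            {p | |eY (φ f) p.1 - eY (φ g) p.1| ≤ (k : ℝ)}) := by
        ext p
        simp only [hCdef, Set.mem_iInter, Set.mem_union, Set.mem_setOf_eq]
        refine forall₂_congr fun f g => ?_
        rw [imp_iff_not_or, not_forall]
        simp only [not_lt]
      rw [hCeq]
      refine isClosed_iInter fun f => isClosed_iInter fun g => IsClosed.union ?_ ?_
      · have : {p : StoneCech Y × (Fin k → StoneCech X) |
            ∃ i, 1 ≤ |eX f (p.2 i) - eX g (p.2 i)|}
            = ⋃ i, {p | 1 ≤ |eX f (p.2 i) - eX g (p.2 i)|} := by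
          ext p; simp
        rw [this]
        refine isClosed_iUnion_of_finite fun i => ?_
        exact isClosed_le continuous_const
          (((eX f).continuous.comp ((continuous_apply i).comp continuous_snd)).sub
            ((eX g).continuous.comp ((continuous_apply i).comp continuous_snd))).abs
      · exact isClosed_le
          (((eY (φ f)).continuous.comp continuous_fst).sub
            ((eY (φ g)).continuous.comp continuous_fst)).abs continuous_const
    have hZeq : {z : StoneCech Y | ∃ F : Set (StoneCech X),
        F.Nonempty ∧ F.Finite ∧ F.ncard ≤ k ∧ aFn eX eY φ z F ≤ (k : ℝ≥0∞)}
        = Prod.fst '' C := by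
      ext z
      constructor
      · rintro ⟨F, h1, h2, h3, h4⟩
        obtain ⟨σ, hσ⟩ := exists_range_eq_of_ncard_le h1 h2 h3
        refine ⟨(z, σ), ?_, rfl⟩
        intro f g hfg
        have hcond : ∀ x ∈ F, |eX f x - eX g x| < 1 := by
          intro x hx
          rw [← hσ] at hx
          obtain ⟨i, rfl⟩ := hx
          exact hfg i
        have hle : ENNReal.ofReal |eY (φ f) z - eY (φ g) z| ≤ (k : ℝ≥0∞) :=
          le_trans (le_iSup₂_of_le (f, g) hcond le_rfl) h4
        rw [← ENNReal.ofReal_natCast k] at hle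
        exact (ENNReal.ofReal_le_ofReal_iff (by positivity)).mp hle
      · rintro ⟨⟨z', σ⟩, hmem, rfl⟩
        refine ⟨Set.range σ, ⟨σ ⟨0, hkpos⟩, Set.mem_range_self _⟩,
          Set.finite_range σ, ?_, ?_⟩
        · calc (Set.range σ).ncard = (σ '' Set.univ).ncard := by rw [Set.image_univ]
            _ ≤ (Set.univ : Set (Fin k)).ncard := Set.ncard_image_le Set.finite_univ
            _ = k := by rw [Set.ncard_univ]; simp
        · rw [aFn]
          refine iSup₂_le fun p hp => ?_
          have hcond : ∀ i, |eX p.1 (σ i) - eX p.2 (σ i)| < 1 :=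
            fun i => hp (σ i) (Set.mem_range_self i)
          have h := hmem p.1 p.2 hcond
          calc ENNReal.ofReal |eY (φ p.1) z' - eY (φ p.2) z'|
              ≤ ENNReal.ofReal (k : ℝ) := ENNReal.ofReal_le_ofReal h
            _ = (k : ℝ≥0∞) := ENNReal.ofReal_natCast k
    rw [hZeq]
    exact ((hCclosed.isCompact).image continuous_fst).isClosed

end Main

/-- If `φ : C*_p(X) → C*_p(Y)` is a uniformly continuous surjection and `Y` is
pseudocompact, then `βY = ⋃_{n,m} Y_{n,m}`: every `y ∈ βY` admits `n, m` and a nonempty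
set `F ⊆ βX` with at most `m` elements such that `a(y, F) ≤ n`. -/
theorem betaY_eq_union_Ynm
    {X Y : Type*} [TopologicalSpace X] [T35Space X] [TopologicalSpace Y] [T35Space Y]
    (φ : Cstar X → Cstar Y) (hφ : UniformContinuous φ) (hsurj : Function.Surjective φ)
    (eX : Cstar X → C(StoneCech X, ℝ)) (heX : ∀ f x, eX f (stoneCechUnit x) = f.1 x)
    (eY : Cstar Y → C(StoneCech Y, ℝ)) (heY : ∀ g y, eY g (stoneCechUnit y) = g.1 y)
    (hYpc : ∀ f : Y → ℝ, Continuous f → ∃ M : ℝ, ∀ y, |f y| ≤ M) :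
    ∀ y : StoneCech Y, ∃ (n m : ℕ) (F : Set (StoneCech X)),
      F.Nonempty ∧ F.Finite ∧ F.ncard ≤ m ∧ aFn eX eY φ y F ≤ (n : ℝ≥0∞) := by
  intro y
  by_contra hcon
  push_neg at hcon
  -- Y is nonempty
  have hYSne : Nonempty (StoneCech Y) := ⟨y⟩
  have hYne : Nonempty Y := denseRange_stoneCechUnit.nonempty
  -- X is nonempty
  have hXne : Nonempty X := by
    by_contra hX
    rw [not_nonempty_iff] at hX
    obtain ⟨y₀⟩ := hYne
    obtain ⟨f0, hf0⟩ := hsurj ⟨fun _ => (0 : ℝ), continuous_const, 0, fun _ => by simp⟩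
    obtain ⟨f1, hf1⟩ := hsurj ⟨fun _ => (1 : ℝ), continuous_const, 1, fun _ => by simp⟩
    have heq : f0 = f1 := Subtype.ext (funext fun x => (hX.false x).elim)
    rw [heq, hf1] at hf0
    have := congrArg (fun u : Cstar Y => u.1 y₀) hf0
    simp at this
  obtain ⟨x₀⟩ := hXne
  set Z : ℕ → Set (StoneCech Y) := fun k =>
    {z | ∃ F : Set (StoneCech X),
      F.Nonempty ∧ F.Finite ∧ F.ncard ≤ k ∧ aFn eX eY φ z F ≤ (k : ℝ≥0∞)} with hZdef
  have hyZ : ∀ k, y ∉ Z k := by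
    rintro k ⟨F, h1, h2, h3, h4⟩
    exact absurd h4 (not_le.mpr (hcon k k F h1 h2 h3))
  have hZmem : ∀ y₀ : Y, ∃ k, stoneCechUnit y₀ ∈ Z k := by
    intro y₀
    obtain ⟨n, m, F, h1, h2, h3, h4⟩ := stepA φ hφ eX heX eY heY x₀ y₀
    refine ⟨max n m, F, h1, h2, le_trans h3 (le_max_right n m), le_trans h4 ?_⟩
    exact_mod_cast Nat.cast_le.mpr (le_max_left n m)
  have hZclosed : ∀ k, IsClosed (Z k) := fun k => stepB φ eX eY k
  -- Urysohn functions
  have hg : ∀ k : ℕ, ∃ g : C(StoneCech Y, ℝ), g y = 0 ∧ (∀ z ∈ Z k, g z = 1) ∧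
      ∀ z, g z ∈ Set.Icc (0 : ℝ) 1 := by
    intro k
    obtain ⟨g, h0, h1, h01⟩ := exists_continuous_zero_one_of_isClosed
      (isClosed_singleton (x := y)) (hZclosed k)
      (Set.disjoint_singleton_left.mpr (hyZ k))
    exact ⟨g, h0 rfl, fun z hz => h1 hz, h01⟩
  choose g hg0 hg1 hg01 using hg
  set f : StoneCech Y → ℝ := fun z => ∑' k, (1 / 2 : ℝ) ^ k * g k z with hfdef
  have hsummable : ∀ z, Summable fun k => (1 / 2 : ℝ) ^ k * g k z := by
    intro z
    refine Summable.of_nonneg_of_le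
      (fun k => mul_nonneg (by positivity) (hg01 k z).1)
      (fun k => ?_) summable_geometric_two
    calc (1 / 2 : ℝ) ^ k * g k z ≤ (1 / 2 : ℝ) ^ k * 1 :=
        mul_le_mul_of_nonneg_left (hg01 k z).2 (by positivity)
      _ = (1 / 2 : ℝ) ^ k := mul_one _
  have hfcont : Continuous f := by
    refine continuous_tsum (fun k => continuous_const.mul (g k).continuous)
      summable_geometric_two (fun k z => ?_)
    rw [Real.norm_eq_abs, abs_mul, abs_of_nonneg (by positivity : (0:ℝ) ≤ (1/2:ℝ)^k),
      abs_of_nonneg (hg01 k z).1]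
    calc (1 / 2 : ℝ) ^ k * g k z ≤ (1 / 2 : ℝ) ^ k * 1 :=
        mul_le_mul_of_nonneg_left (hg01 k z).2 (by positivity)
      _ = (1 / 2 : ℝ) ^ k := mul_one _
  have hfy : f y = 0 := by
    rw [hfdef]
    simp only [hg0, mul_zero]
    exact tsum_zero
  have hfZ : ∀ (k : ℕ) z, z ∈ Z k → (1 / 2 : ℝ) ^ k ≤ f z := by
    intro k z hz
    have h1 : (1 / 2 : ℝ) ^ k * g k z ≤ f z :=
      Summable.le_tsum (hsummable z) k fun j _ =>
        mul_nonneg (by positivity) (hg01 j z).1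
    rwa [hg1 k z hz, mul_one] at h1
  have hfpos : ∀ y₀ : Y, 0 < f (stoneCechUnit y₀) := by
    intro y₀
    obtain ⟨k, hk⟩ := hZmem y₀
    exact lt_of_lt_of_le (by positivity) (hfZ k _ hk)
  set h : Y → ℝ := fun y₀ => (f (stoneCechUnit y₀))⁻¹ with hhdef
  have hhcont : Continuous h :=
    (hfcont.comp continuous_stoneCechUnit).inv₀ fun y₀ => (hfpos y₀).ne'
  obtain ⟨M, hM⟩ := hYpc h hhcont
  set S' : Set (StoneCech Y) := {z | 1 ≤ M * f z} with hS'def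
  have hS'closed : IsClosed S' :=
    isClosed_le continuous_const (continuous_const.mul hfcont)
  have hsub : Set.range (stoneCechUnit : Y → StoneCech Y) ⊆ S' := by
    rintro _ ⟨y₀, rfl⟩
    have h1 : 0 < f (stoneCechUnit y₀) := hfpos y₀
    have h2 : (f (stoneCechUnit y₀))⁻¹ ≤ M := le_trans (le_abs_self _) (hM y₀)
    have h3 : f (stoneCechUnit y₀) * (f (stoneCechUnit y₀))⁻¹ = 1 :=
      mul_inv_cancel₀ h1.ne'
    show 1 ≤ M * f (stoneCechUnit y₀)
    nlinarith
  have hyS' : y ∈ S' := by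
    have hclos : closure (Set.range (stoneCechUnit : Y → StoneCech Y)) ⊆ S' :=
      closure_minimal hsub hS'closed
    have : y ∈ closure (Set.range (stoneCechUnit : Y → StoneCech Y)) := by
      rw [denseRange_stoneCechUnit.closure_eq]; trivial
    exact hclos this
  rw [hS'def] at hyS'
  simp only [Set.mem_setOf_eq, hfy, mul_zero] at hyS'
  linarith
end

section
/- Let φ : C*_p(X) → C*_p(Y) be a uniformly continuous surjection and fix y ∈ βY. The family 𝒜(y) of compact subsets K ⊆ βX with a(y,K) < ∞ is closed under finite intersections; more precisely, for K₁, K₂ ∈ 𝒜(y) one has a(y, K₁ ∩ K₂) ≤ a(y, K₁) + a(y, K₂). -/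
open scoped ENNReal

/-- The family `𝒜(y)` of compact `K ⊆ βX` with `a(y,K) < ∞` is closed under finite
intersections; more precisely `a(y, K₁ ∩ K₂) ≤ a(y, K₁) + a(y, K₂)` (so in particular
`a(y, K₁ ∩ K₂) < ∞`). -/
theorem a_inter_le_add
    {X Y : Type*} [TopologicalSpace X] [T35Space X] [TopologicalSpace Y] [T35Space Y]
    (φ : Cstar X → Cstar Y) (hφ : UniformContinuous φ) (hsurj : Function.Surjective φ)
    (eX : Cstar X → C(StoneCech X, ℝ)) (heX : ∀ f x, eX f (stoneCechUnit x) = f.1 x)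
    (eY : Cstar Y → C(StoneCech Y, ℝ)) (heY : ∀ g y, eY g (stoneCechUnit y) = g.1 y)
    (y : StoneCech Y) (K₁ K₂ : Set (StoneCech X))
    (hK₁ : IsCompact K₁) (hK₂ : IsCompact K₂)
    (ha₁ : aFn eX eY φ y K₁ < ⊤) (ha₂ : aFn eX eY φ y K₂ < ⊤) :
    aFn eX eY φ y (K₁ ∩ K₂) ≤ aFn eX eY φ y K₁ + aFn eX eY φ y K₂ ∧
      aFn eX eY φ y (K₁ ∩ K₂) < ⊤ := by

  have key : aFn eX eY φ y (K₁ ∩ K₂) ≤ aFn eX eY φ y K₁ + aFn eX eY φ y K₂ := by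
    rw [aFn]
    refine iSup₂_le fun p hp => ?_
    obtain ⟨f, g⟩ := p
    simp only at hp ⊢
    set U : Set (StoneCech X) := {x | |eX f x - eX g x| < 1} with hUdef
    have hUopen : IsOpen U := by
      have hc : Continuous fun x => |eX f x - eX g x| :=
        ((eX f).continuous.sub (eX g).continuous).abs
      exact isOpen_lt hc continuous_const
    have hC1 : IsClosed (K₁ \ U) := hK₁.isClosed.sdiff hUopen
    have hC2 : IsClosed (K₂ \ U) := hK₂.isClosed.sdiff hUopen
    have hdisj : Disjoint (K₂ \ U) (K₁ \ U) := by
      rw [Set.disjoint_left]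
      rintro x ⟨hx2, hxU⟩ ⟨hx1, _⟩
      exact hxU (hp x ⟨hx1, hx2⟩)
    obtain ⟨u, hu0, hu1, hu01⟩ := exists_continuous_zero_one_of_isClosed hC2 hC1 hdisj
    obtain ⟨Mf, hMf⟩ := f.2.2
    obtain ⟨Mg, hMg⟩ := g.2.2
    set h : Cstar X := ⟨fun x => u (stoneCechUnit x) * f.1 x
        + (1 - u (stoneCechUnit x)) * g.1 x,
      ⟨by
        exact ((u.continuous.comp continuous_stoneCechUnit).mul f.2.1).add
          ((continuous_const.sub (u.continuous.comp continuous_stoneCechUnit)).mul g.2.1),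
        ⟨Mf + Mg, fun x => by
          obtain ⟨h0, h1⟩ := hu01 (stoneCechUnit x)
          have hf := hMf x
          have hg := hMg x
          have haf := abs_nonneg (f.1 x)
          have hag := abs_nonneg (g.1 x)
          have h2 := abs_le.mp hf
          have h3 := abs_le.mp hg
          have hMf0 : 0 ≤ Mf := le_trans haf hf
          have hMg0 : 0 ≤ Mg := le_trans hag hg
          show |u (stoneCechUnit x) * f.1 x + (1 - u (stoneCechUnit x)) * g.1 x| ≤ Mf + Mg
          have e1 : u (stoneCechUnit x) * f.1 x ≤ u (stoneCechUnit x) * Mf :=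
            mul_le_mul_of_nonneg_left h2.2 h0
          have e2 : u (stoneCechUnit x) * (-Mf) ≤ u (stoneCechUnit x) * f.1 x :=
            mul_le_mul_of_nonneg_left h2.1 h0
          have h1' : (0:ℝ) ≤ 1 - u (stoneCechUnit x) := by linarith
          have e3 : (1 - u (stoneCechUnit x)) * g.1 x ≤ (1 - u (stoneCechUnit x)) * Mg :=
            mul_le_mul_of_nonneg_left h3.2 h1'
          have e4 : (1 - u (stoneCechUnit x)) * (-Mg) ≤ (1 - u (stoneCechUnit x)) * g.1 x :=
            mul_le_mul_of_nonneg_left h3.1 h1'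
          rw [abs_le]
          constructor <;> nlinarith⟩⟩⟩ with hhdef
    have hext : ∀ x, eX h x = u x * eX f x + (1 - u x) * eX g x := by
      have heq : (eX h : StoneCech X → ℝ)
          = fun x => u x * eX f x + (1 - u x) * eX g x := by
        refine Continuous.ext_on denseRange_stoneCechUnit (eX h).continuous ?_ ?_
        · exact (u.continuous.mul (eX f).continuous).add
            ((continuous_const.sub u.continuous).mul (eX g).continuous)
        · rintro _ ⟨x, rfl⟩
          simp [heX, hhdef]
      exact fun x => congrFun heq x
    have hboundK : ∀ x, x ∈ U ∨ u x = 1 ∨ u x = 0 →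
        True := fun _ _ => trivial
    have hp1 : ∀ x ∈ K₁, |eX f x - eX h x| < 1 := by
      intro x hx
      obtain ⟨h0, h1⟩ := hu01 x
      have : eX f x - eX h x = (1 - u x) * (eX f x - eX g x) := by
        rw [hext]; ring
      rw [this]
      by_cases hxU : x ∈ U
      · have hd : |eX f x - eX g x| < 1 := hxU
        have hd0 := abs_nonneg (eX f x - eX g x)
        rw [abs_mul]
        have h1u : |1 - u x| ≤ 1 := by rw [abs_le]; constructor <;> linarith
        calc |1 - u x| * |eX f x - eX g x| ≤ 1 * |eX f x - eX g x| :=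
              mul_le_mul_of_nonneg_right h1u hd0
          _ < 1 := by rwa [one_mul]
      · have : u x = 1 := hu1 ⟨hx, hxU⟩
        rw [this]; norm_num
    have hp2 : ∀ x ∈ K₂, |eX h x - eX g x| < 1 := by
      intro x hx
      obtain ⟨h0, h1⟩ := hu01 x
      have : eX h x - eX g x = u x * (eX f x - eX g x) := by
        rw [hext]; ring
      rw [this]
      by_cases hxU : x ∈ U
      · have hd : |eX f x - eX g x| < 1 := hxU
        have hd0 := abs_nonneg (eX f x - eX g x)
        rw [abs_mul]
        have h1u : |u x| ≤ 1 := by rw [abs_le]; constructor <;> linarith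
        calc |u x| * |eX f x - eX g x| ≤ 1 * |eX f x - eX g x| :=
              mul_le_mul_of_nonneg_right h1u hd0
          _ < 1 := by rwa [one_mul]
      · have : u x = 0 := hu0 ⟨hx, hxU⟩
        rw [this]; norm_num
    calc ENNReal.ofReal |eY (φ f) y - eY (φ g) y|
        ≤ ENNReal.ofReal |eY (φ f) y - eY (φ h) y|
          + ENNReal.ofReal |eY (φ h) y - eY (φ g) y| := by
          rw [← ENNReal.ofReal_add (abs_nonneg _) (abs_nonneg _)]
          exact ENNReal.ofReal_le_ofReal (abs_sub_le _ _ _)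
      _ ≤ aFn eX eY φ y K₁ + aFn eX eY φ y K₂ := by
          gcongr
          · rw [aFn]
            exact le_iSup₂_of_le (f, h) hp1 le_rfl
          · rw [aFn]
            exact le_iSup₂_of_le (h, g) hp2 le_rfl
  exact ⟨key, key.trans_lt (ENNReal.add_lt_top.mpr ⟨ha₁, ha₂⟩)⟩
end

section
/- Let φ : C*_p(X) → C*_p(Y) be a uniformly continuous surjection and let y ∈ βY be such that 𝒜(y) contains a nonempty finite subset of βX (i.e., y ∈ ⋃_{n,m} Y_{n,m}). Then K(y) := ⋂ 𝒜(y) is a nonempty finite subset of βX and K(y) ∈ 𝒜(y), i.e., a(y, K(y)) < ∞. Moreover, if y ∈ Y then K(y) ⊆ X. -/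
open scoped ENNReal Uniformity
open Metric

section Aux

variable {X Y : Type*} [TopologicalSpace X] [TopologicalSpace Y]
  (eX : Cstar X → C(StoneCech X, ℝ)) (eY : Cstar Y → C(StoneCech Y, ℝ))
  (φ : Cstar X → Cstar Y) (y : StoneCech Y)

lemma le_aFn {K : Set (StoneCech X)} {f g : Cstar X}
    (h : ∀ x ∈ K, |eX f x - eX g x| < 1) :
    ENNReal.ofReal |eY (φ f) y - eY (φ g) y| ≤ aFn eX eY φ y K := by
  exact le_iSup₂ (f := fun (p : Cstar X × Cstar X)
    (_ : ∀ x ∈ K, |eX p.1 x - eX p.2 x| < 1) =>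
    ENNReal.ofReal |eY (φ p.1) y - eY (φ p.2) y|) (f, g) h

lemma aFn_le {K : Set (StoneCech X)} {c : ℝ≥0∞}
    (h : ∀ f g : Cstar X, (∀ x ∈ K, |eX f x - eX g x| < 1) →
      ENNReal.ofReal |eY (φ f) y - eY (φ g) y| ≤ c) :
    aFn eX eY φ y K ≤ c := by
  exact iSup₂_le fun p hp => h p.1 p.2 hp

/-- Restrict a continuous function on `βX` to an element of `C*(X)`. -/
noncomputable def liftFn (h : C(StoneCech X, ℝ)) : Cstar X :=
  ⟨fun x => h (stoneCechUnit x), by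
    refine ⟨h.continuous.comp continuous_stoneCechUnit, ?_⟩
    obtain ⟨r, hr⟩ := (isCompact_range h.continuous).isBounded.subset_closedBall 0
    exact ⟨r, fun x => by simpa [Real.dist_eq] using hr ⟨stoneCechUnit x, rfl⟩⟩⟩

lemma eX_liftFn (heX : ∀ f x, eX f (stoneCechUnit x) = f.1 x)
    (h : C(StoneCech X, ℝ)) : ∀ z, eX (liftFn h) z = h z := by
  have h2 : ⇑(eX (liftFn h)) = ⇑h := by
    refine Continuous.ext_on denseRange_stoneCechUnit (eX _).continuous h.continuous ?_
    rintro z ⟨x, rfl⟩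
    exact heX _ x
  exact fun z => congrFun h2 z

/-- constant functions in `C*(Y)`. -/
def constY (c : ℝ) : Cstar Y := ⟨fun _ => c, continuous_const, |c|, fun _ => le_refl _⟩

lemma eY_constY (heY : ∀ g y, eY g (stoneCechUnit y) = g.1 y) (c : ℝ) :
    ∀ z, eY (constY c) z = c := by
  have h2 : ⇑(eY (constY c)) = fun _ => c := by
    refine Continuous.ext_on denseRange_stoneCechUnit (eY _).continuous continuous_const ?_
    rintro z ⟨x, rfl⟩
    exact heY _ x
  exact fun z => congrFun h2 z

/-- Members of `𝒜(y)` are nonempty. -/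
lemma nonempty_of_aFn_lt_top (hsurj : Function.Surjective φ)
    (heY : ∀ g y, eY g (stoneCechUnit y) = g.1 y)
    {K : Set (StoneCech X)} (hK : aFn eX eY φ y K < ⊤) : K.Nonempty := by
  rw [Set.nonempty_iff_ne_empty]
  rintro rfl
  set a := aFn eX eY φ y (∅ : Set (StoneCech X)) with ha
  obtain ⟨f, hf⟩ := hsurj (constY (a.toReal + 1))
  obtain ⟨g, hg⟩ := hsurj (constY 0)
  have h1 : ENNReal.ofReal |eY (φ f) y - eY (φ g) y| ≤ a :=
    le_aFn eX eY φ y (fun x hx => absurd hx (Set.notMem_empty x))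
  rw [hf, hg, eY_constY eY heY, eY_constY eY heY, sub_zero,
    abs_of_nonneg (by positivity)] at h1
  have h2 : a < ENNReal.ofReal (a.toReal + 1) :=
    (ENNReal.lt_ofReal_iff_toReal_lt hK.ne).2 (by linarith)
  exact absurd (lt_of_lt_of_le h2 h1) (lt_irrefl _)

/-- `𝒜(y)` is closed under intersections. -/
lemma aFn_inter (heX : ∀ f x, eX f (stoneCechUnit x) = f.1 x)
    {K L : Set (StoneCech X)} (hK : IsCompact K) (hL : IsCompact L) :
    aFn eX eY φ y (K ∩ L) ≤ aFn eX eY φ y K + aFn eX eY φ y L := by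
  refine aFn_le eX eY φ y (fun f g hcond => ?_)
  set U := {x : StoneCech X | |eX f x - eX g x| < 1} with hUdef
  have hU : IsOpen U := by
    have : Continuous fun x => |eX f x - eX g x| :=
      ((eX f).continuous.sub (eX g).continuous).abs
    exact isOpen_Iio.preimage this
  have hKU : IsCompact (K \ U) := hK.diff hU
  have hLU : IsCompact (L \ U) := hL.diff hU
  have hdisj : Disjoint (L \ U) (K \ U) := by
    rw [Set.disjoint_left]
    rintro x ⟨hxL, hxU⟩ ⟨hxK, -⟩
    exact hxU (hcond x ⟨hxK, hxL⟩)
  obtain ⟨w, hw0, hw1, hw01⟩ :=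
    exists_continuous_zero_one_of_isClosed hLU.isClosed hKU.isClosed hdisj
  set hC : C(StoneCech X, ℝ) :=
    ⟨fun z => w z * eX f z + (1 - w z) * eX g z, by fun_prop⟩ with hCdef
  set h₀ := liftFn (X := X) hC with h₀def
  have he : ∀ z, eX h₀ z = hC z := eX_liftFn eX heX hC
  have c1 : ∀ x ∈ K, |eX f x - eX h₀ x| < 1 := by
    intro x hx
    rw [he]
    have hrw : eX f x - hC x = (1 - w x) * (eX f x - eX g x) := by
      simp only [hCdef, ContinuousMap.coe_mk]; ring
    rw [hrw]
    by_cases hxU : x ∈ U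
    · have h01 := hw01 x
      calc |(1 - w x) * (eX f x - eX g x)| = |1 - w x| * |eX f x - eX g x| := abs_mul _ _
        _ ≤ 1 * |eX f x - eX g x| := by
            apply mul_le_mul_of_nonneg_right _ (abs_nonneg _)
            rw [abs_of_nonneg (by linarith [h01.2])]
            linarith [h01.1]
        _ < 1 := by rw [one_mul]; exact hxU
    · have : w x = 1 := hw1 ⟨hx, hxU⟩
      simp [this]
  have c2 : ∀ x ∈ L, |eX h₀ x - eX g x| < 1 := by
    intro x hx
    rw [he]
    have hrw : hC x - eX g x = w x * (eX f x - eX g x) := by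
      simp only [hCdef, ContinuousMap.coe_mk]; ring
    rw [hrw]
    by_cases hxU : x ∈ U
    · have h01 := hw01 x
      calc |w x * (eX f x - eX g x)| = |w x| * |eX f x - eX g x| := abs_mul _ _
        _ ≤ 1 * |eX f x - eX g x| := by
            apply mul_le_mul_of_nonneg_right _ (abs_nonneg _)
            rw [abs_of_nonneg h01.1]; exact h01.2
        _ < 1 := by rw [one_mul]; exact hxU
    · have : w x = 0 := hw0 ⟨hx, hxU⟩
      simp [this]
  calc ENNReal.ofReal |eY (φ f) y - eY (φ g) y|
      ≤ ENNReal.ofReal (|eY (φ f) y - eY (φ h₀) y| + |eY (φ h₀) y - eY (φ g) y|) :=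
        ENNReal.ofReal_le_ofReal (abs_sub_le _ _ _)
    _ ≤ ENNReal.ofReal |eY (φ f) y - eY (φ h₀) y|
        + ENNReal.ofReal |eY (φ h₀) y - eY (φ g) y| := ENNReal.ofReal_add_le
    _ ≤ aFn eX eY φ y K + aFn eX eY φ y L :=
        add_le_add (le_aFn eX eY φ y c1) (le_aFn eX eY φ y c2)

/-- Uniform continuity at a point `y₀` gives a finite set and `δ`. -/
lemma uc_point (hφ : UniformContinuous φ) (y₀ : Y) :
    ∃ (S : Finset X) (δ : ℝ), 0 < δ ∧ ∀ f g : Cstar X,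
      (∀ x ∈ S, |f.1 x - g.1 x| < δ) → |(φ f).1 y₀ - (φ g).1 y₀| < 1 := by
  have hev : UniformContinuous (fun h : Cstar Y => h.1 y₀) :=
    (Pi.uniformContinuous_proj _ y₀).comp uniformContinuous_subtype_val
  have hψ : UniformContinuous fun f : Cstar X => (φ f).1 y₀ := hev.comp hφ
  have h1 : {p : ℝ × ℝ | dist p.1 p.2 < 1} ∈ 𝓤 ℝ := dist_mem_uniformity one_pos
  have h2 := hψ h1
  rw [uniformity_subtype, Filter.mem_map, Filter.mem_comap] at h2
  obtain ⟨t, ht, hsub⟩ := h2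
  rw [Pi.uniformity, Filter.mem_iInf'] at ht
  obtain ⟨I, hIfin, V, hV, hVuniv, -, htV⟩ := ht
  choose W hW hWsub using fun i => Filter.mem_comap.mp (hV i)
  choose δf hδpos hδ using fun i => mem_uniformity_dist.mp (hW i)
  classical
  refine ⟨hIfin.toFinset, if h : hIfin.toFinset.Nonempty then hIfin.toFinset.inf' h δf else 1,
    ?_, ?_⟩
  · split_ifs with h
    · exact (Finset.lt_inf'_iff h).2 fun i _ => hδpos i
    · exact one_pos
  · intro f g hfg
    have hmem : (f.1, g.1) ∈ t := by
      rw [htV, Set.mem_iInter]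
      intro i
      by_cases hi : i ∈ I
      · apply hWsub i
        refine hδ i ?_
        have hiS : i ∈ hIfin.toFinset := hIfin.mem_toFinset.2 hi
        have hne : hIfin.toFinset.Nonempty := ⟨i, hiS⟩
        have := hfg i hiS
        rw [dif_pos hne] at this
        have hle : hIfin.toFinset.inf' hne δf ≤ δf i := Finset.inf'_le _ hiS
        rw [Real.dist_eq]
        calc |f.1 i - g.1 i| < hIfin.toFinset.inf' hne δf := this
          _ ≤ δf i := hle
      · rw [hVuniv i hi]; trivial
    have : ((f,g) : Cstar X × Cstar X) ∈ (fun q : Cstar X × Cstar X => ((q.1 : X → ℝ), (q.2 : X → ℝ))) ⁻¹' t := hmem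
    have := hsub this
    simpa [Real.dist_eq] using this

end Aux

section Main

variable {X Y : Type*} [TopologicalSpace X] [TopologicalSpace Y]
  (eX : Cstar X → C(StoneCech X, ℝ)) (eY : Cstar Y → C(StoneCech Y, ℝ))
  (φ : Cstar X → Cstar Y) (y : StoneCech Y)

/-- Key step for the last claim: if `y` comes from `Y` and `p ∈ βX \ X`, then removing `p`
from a finite member of `𝒜(y)` stays in `𝒜(y)`. -/
lemma aFn_diff (heX : ∀ f x, eX f (stoneCechUnit x) = f.1 x)
    (heY : ∀ g y, eY g (stoneCechUnit y) = g.1 y)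
    (hφ : UniformContinuous φ)
    {M : Set (StoneCech X)} (hM : M.Finite) {p : StoneCech X}
    (hp : p ∉ Set.range (stoneCechUnit : X → StoneCech X))
    (y₀ : Y) (hy : y = stoneCechUnit y₀) :
    aFn eX eY φ y (M \ {p}) ≤ 1 + aFn eX eY φ y M := by
  obtain ⟨S, δ, hδ, hUC⟩ := uc_point φ hφ y₀
  refine aFn_le eX eY φ y (fun f g hcond => ?_)
  set A : Set (StoneCech X) := (stoneCechUnit '' ↑S) ∪ (M \ {p}) with hAdef
  have hAfin : A.Finite := (S.finite_toSet.image _).union hM.diff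
  have hAclosed : IsClosed A := hAfin.isClosed
  have hpA : p ∉ A := by
    rintro (⟨x, -, rfl⟩ | ⟨-, hp2⟩)
    · exact hp ⟨x, rfl⟩
    · exact hp2 rfl
  obtain ⟨w, hw0, hw1, hw01⟩ :=
    exists_continuous_zero_one_of_isClosed hAclosed isClosed_singleton
      (Set.disjoint_singleton_right.mpr hpA)
  set hC : C(StoneCech X, ℝ) :=
    ⟨fun z => (1 - w z) * eX f z + w z * eX g z, by fun_prop⟩ with hCdef
  set h₀ := liftFn (X := X) hC with h₀def
  have he : ∀ z, eX h₀ z = hC z := eX_liftFn eX heX hC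
  have hval : ∀ x : X, h₀.1 x = hC (stoneCechUnit x) := fun x => rfl
  have c1 : ∀ x ∈ S, |f.1 x - h₀.1 x| < δ := by
    intro x hx
    have hwx : w (stoneCechUnit x) = 0 := hw0 (Or.inl ⟨x, hx, rfl⟩)
    have : h₀.1 x = f.1 x := by
      rw [hval, hCdef]
      simp only [ContinuousMap.coe_mk, hwx]
      rw [heX]
      ring
    rw [this, sub_self, abs_zero]
    exact hδ
  have hUC1 : |(φ f).1 y₀ - (φ h₀).1 y₀| < 1 := hUC f h₀ c1
  have c2 : ∀ x ∈ M, |eX h₀ x - eX g x| < 1 := by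
    intro x hx
    rw [he]
    by_cases hxp : x = p
    · subst hxp
      have hwx : w x = 1 := hw1 rfl
      simp only [hCdef, ContinuousMap.coe_mk, hwx]
      norm_num
    · have hxA : x ∈ A := Or.inr ⟨hx, hxp⟩
      have hwx : w x = 0 := hw0 hxA
      have hxcond := hcond x ⟨hx, hxp⟩
      simp only [hCdef, ContinuousMap.coe_mk, hwx]
      calc |(1 - 0) * eX f x + 0 * eX g x - eX g x| = |eX f x - eX g x| := by ring_nf
        _ < 1 := hxcond
  have heq1 : eY (φ f) y = (φ f).1 y₀ := by rw [hy, heY]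
  have heq2 : eY (φ h₀) y = (φ h₀).1 y₀ := by rw [hy, heY]
  calc ENNReal.ofReal |eY (φ f) y - eY (φ g) y|
      ≤ ENNReal.ofReal (|eY (φ f) y - eY (φ h₀) y| + |eY (φ h₀) y - eY (φ g) y|) :=
        ENNReal.ofReal_le_ofReal (abs_sub_le _ _ _)
    _ ≤ ENNReal.ofReal |eY (φ f) y - eY (φ h₀) y|
        + ENNReal.ofReal |eY (φ h₀) y - eY (φ g) y| := ENNReal.ofReal_add_le
    _ ≤ 1 + aFn eX eY φ y M := by
        refine add_le_add ?_ (le_aFn eX eY φ y c2)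
        rw [heq1, heq2]
        calc ENNReal.ofReal |(φ f).1 y₀ - (φ h₀).1 y₀| ≤ ENNReal.ofReal 1 :=
              ENNReal.ofReal_le_ofReal hUC1.le
          _ = 1 := ENNReal.ofReal_one

end Main

/-- If `𝒜(y)` contains a nonempty finite subset of `βX`, then the support
`K(y) = ⋂ 𝒜(y)` is a nonempty finite (compact) subset of `βX` with `a(y, K(y)) < ∞`;
moreover if `y` lies in (the copy of) `Y` then `K(y)` lies in (the copy of) `X`. -/
theorem support_finite_nonempty
    {X Y : Type*} [TopologicalSpace X] [T35Space X] [TopologicalSpace Y] [T35Space Y]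
    (φ : Cstar X → Cstar Y) (hφ : UniformContinuous φ) (hsurj : Function.Surjective φ)
    (eX : Cstar X → C(StoneCech X, ℝ)) (heX : ∀ f x, eX f (stoneCechUnit x) = f.1 x)
    (eY : Cstar Y → C(StoneCech Y, ℝ)) (heY : ∀ g y, eY g (stoneCechUnit y) = g.1 y)
    (y : StoneCech Y)
    (hy : ∃ F : Set (StoneCech X), F.Nonempty ∧ F.Finite ∧ aFn eX eY φ y F < ⊤) :
    (⋂₀ {K : Set (StoneCech X) | IsCompact K ∧ aFn eX eY φ y K < ⊤}).Nonempty ∧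
    (⋂₀ {K : Set (StoneCech X) | IsCompact K ∧ aFn eX eY φ y K < ⊤}).Finite ∧
    aFn eX eY φ y (⋂₀ {K : Set (StoneCech X) | IsCompact K ∧ aFn eX eY φ y K < ⊤}) < ⊤ ∧
    (∀ y₀ : Y, y = stoneCechUnit y₀ →
      ⋂₀ {K : Set (StoneCech X) | IsCompact K ∧ aFn eX eY φ y K < ⊤} ⊆
        Set.range (stoneCechUnit : X → StoneCech X)) := by
  classical
  obtain ⟨F, hFne, hFfin, hFa⟩ := hy
  set A : Set (Set (StoneCech X)) := {K | IsCompact K ∧ aFn eX eY φ y K < ⊤} with hAdef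
  have hFA : F ∈ A := ⟨hFfin.isCompact, hFa⟩
  have hclos : ∀ K ∈ A, ∀ L ∈ A, K ∩ L ∈ A := by
    intro K hK L hL
    refine ⟨hK.1.inter_right hL.1.isClosed, ?_⟩
    exact lt_of_le_of_lt (aFn_inter eX eY φ y heX hK.1 hL.1)
      (ENNReal.add_lt_top.mpr ⟨hK.2, hL.2⟩)
  set S : Set (Set (StoneCech X)) := {T | T ∈ A ∧ T ⊆ F} with hSdef
  have hFS : F ∈ S := ⟨hFA, Set.Subset.rfl⟩
  set ns : Set ℕ := Set.ncard '' S with hnsdef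
  have hnsne : ns.Nonempty := ⟨F.ncard, F, hFS, rfl⟩
  obtain ⟨M, hMS, hMcard⟩ := Nat.sInf_mem hnsne
  have hMfin : M.Finite := hFfin.subset hMS.2
  have hmin : ∀ T ∈ S, M ⊆ T := by
    intro T hT
    have hMT : M ∩ T ∈ S := ⟨hclos M hMS.1 T hT.1, Set.inter_subset_left.trans hMS.2⟩
    have h1 : (M ∩ T).ncard ≤ M.ncard := Set.ncard_le_ncard Set.inter_subset_left hMfin
    have h2 : M.ncard ≤ (M ∩ T).ncard := by
      rw [hMcard]; exact Nat.sInf_le ⟨M ∩ T, hMT, rfl⟩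
    have := Set.eq_of_subset_of_ncard_le Set.inter_subset_left h2 hMfin
    rw [← this]
    exact Set.inter_subset_right
  have hMA : M ∈ A := hMS.1
  have hEq : ⋂₀ A = M := by
    apply subset_antisymm
    · exact Set.sInter_subset_of_mem hMA
    · refine Set.subset_sInter (fun K hK => ?_)
      exact (hmin (K ∩ F) ⟨hclos K hK F hFA, Set.inter_subset_right⟩).trans
        Set.inter_subset_left
  rw [hAdef] at hEq
  rw [hEq]
  refine ⟨nonempty_of_aFn_lt_top eX eY φ y hsurj heY hMA.2, hMfin, hMA.2, ?_⟩
  intro y₀ hy₀ z hz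
  by_contra hzX
  have hK' : M \ {z} ∈ A := by
    refine ⟨(hMfin.diff.isCompact), ?_⟩
    refine lt_of_le_of_lt (aFn_diff eX eY φ y heX heY hφ hMfin hzX y₀ hy₀) ?_
    exact ENNReal.add_lt_top.mpr ⟨ENNReal.one_lt_top, hMA.2⟩
  have h5 : ⋂₀ {K : Set (StoneCech X) | IsCompact K ∧ aFn eX eY φ y K < ⊤} ⊆ M \ {z} :=
    Set.sInter_subset_of_mem hK'
  rw [hEq] at h5
  exact (h5 hz).2 rfl
end

section
/- Let φ : C*_p(X) → C*_p(Y) be a uniformly continuous surjection, let U ⊆ βX be open, and let n be a positive integer. For every y ∈ Y_n with K(y) ∩ U ≠ ∅, there exists an open neighborhood V of y in βY such that for every z ∈ V ∩ Y_n and every compact A ⊆ βX with a(z,A) ≤ n, one has A ∩ U ≠ ∅. -/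
open scoped ENNReal

/-- Let `U ⊆ βX` be open and `n` a positive integer. For every `y ∈ Y_n` whose support
`K(y) = ⋂ 𝒜(y)` (a nonempty finite set with `a(y,K(y)) < ∞`) meets `U`, there is an open
neighborhood `V` of `y` in `βY` such that for every `z ∈ V ∩ Y_n` and every compact
`A ⊆ βX` with `a(z,A) ≤ n` one has `A ∩ U ≠ ∅`. -/
theorem exists_nbhd_forcing_meet
    {X Y : Type*} [TopologicalSpace X] [T35Space X] [TopologicalSpace Y] [T35Space Y]
    (φ : Cstar X → Cstar Y) (hφ : UniformContinuous φ) (hsurj : Function.Surjective φ)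
    (eX : Cstar X → C(StoneCech X, ℝ)) (heX : ∀ f x, eX f (stoneCechUnit x) = f.1 x)
    (eY : Cstar Y → C(StoneCech Y, ℝ)) (heY : ∀ g y, eY g (stoneCechUnit y) = g.1 y)
    (U : Set (StoneCech X)) (hU : IsOpen U) (n : ℕ) (hn : 0 < n)
    (y : StoneCech Y) (hyn : aFn eX eY φ y Set.univ ≤ (n : ℝ≥0∞))
    (hKfin : (⋂₀ {K : Set (StoneCech X) | IsCompact K ∧ aFn eX eY φ y K < ⊤}).Finite)
    (hKne : (⋂₀ {K : Set (StoneCech X) | IsCompact K ∧ aFn eX eY φ y K < ⊤}).Nonempty)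
    (hay : aFn eX eY φ y
      (⋂₀ {K : Set (StoneCech X) | IsCompact K ∧ aFn eX eY φ y K < ⊤}) < ⊤)
    (hyU : ((⋂₀ {K : Set (StoneCech X) | IsCompact K ∧ aFn eX eY φ y K < ⊤}) ∩ U).Nonempty) :
    ∃ V : Set (StoneCech Y), IsOpen V ∧ y ∈ V ∧
      ∀ z ∈ V, aFn eX eY φ z Set.univ ≤ (n : ℝ≥0∞) →
        ∀ A : Set (StoneCech X), IsCompact A → aFn eX eY φ z A ≤ (n : ℝ≥0∞) →
          (A ∩ U).Nonempty := by
  -- Uᶜ is compact in βX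
  have hUc : IsCompact Uᶜ := hU.isClosed_compl.isCompact
  -- a(y, Uᶜ) = ⊤, else K(y) ⊆ Uᶜ contradicting hyU
  have htop : ¬ aFn eX eY φ y Uᶜ < ⊤ := by
    intro h
    obtain ⟨x, hxK, hxU⟩ := hyU
    have : x ∈ Uᶜ := hxK Uᶜ ⟨hUc, h⟩
    exact this hxU
  have htop' : (n : ℝ≥0∞) < aFn eX eY φ y Uᶜ := by
    have : aFn eX eY φ y Uᶜ = ⊤ := by
      by_contra h
      exact htop (lt_top_iff_ne_top.mpr h)
    rw [this]; exact ENNReal.natCast_lt_top n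
  -- extract a witness pair
  rw [aFn, lt_iSup_iff] at htop'
  obtain ⟨p, hp⟩ := htop'
  rw [lt_iSup_iff] at hp
  obtain ⟨hcond, hgap⟩ := hp
  have hgapR : (n : ℝ) < |eY (φ p.1) y - eY (φ p.2) y| := by
    by_contra h
    push_neg at h
    have : ENNReal.ofReal |eY (φ p.1) y - eY (φ p.2) y| ≤ (n : ℝ≥0∞) := by
      calc ENNReal.ofReal |eY (φ p.1) y - eY (φ p.2) y|
          ≤ ENNReal.ofReal (n : ℝ) := ENNReal.ofReal_le_ofReal h
        _ = (n : ℝ≥0∞) := ENNReal.ofReal_natCast n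
    exact absurd hgap (not_lt.mpr this)
  -- define V
  refine ⟨{z | (n : ℝ) < |eY (φ p.1) z - eY (φ p.2) z|}, ?_, hgapR, ?_⟩
  · have hc : Continuous fun z => |eY (φ p.1) z - eY (φ p.2) z| :=
      ((eY (φ p.1)).continuous.sub (eY (φ p.2)).continuous).abs
    exact isOpen_Ioi.preimage hc
  · intro z hz _ A _ hA
    by_contra hAU
    rw [Set.not_nonempty_iff_eq_empty] at hAU
    have hAsub : A ⊆ Uᶜ := by
      intro x hx hxU
      exact absurd hAU (Set.nonempty_iff_ne_empty.mp ⟨x, hx, hxU⟩)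
    have hcondA : ∀ x ∈ A, |eX p.1 x - eX p.2 x| < 1 := fun x hx => hcond x (hAsub hx)
    have hle : ENNReal.ofReal |eY (φ p.1) z - eY (φ p.2) z| ≤ aFn eX eY φ z A :=
      le_iSup₂ (f := fun (q : Cstar X × Cstar X)
        (_ : ∀ x ∈ A, |eX q.1 x - eX q.2 x| < 1) =>
        ENNReal.ofReal |eY (φ q.1) z - eY (φ q.2) z|) p hcondA
    have h1 : (n : ℝ≥0∞) < ENNReal.ofReal |eY (φ p.1) z - eY (φ p.2) z| := by
      rw [← ENNReal.ofReal_natCast n]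
      exact ENNReal.ofReal_lt_ofReal_iff (lt_of_le_of_lt (Nat.cast_nonneg n) hz) |>.mpr hz
    exact absurd (le_trans hle hA) (not_le.mpr h1)
end

section
/- Let κ be an infinite cardinal and let X, Y be Tychonoff spaces. If C_p(X) and C_p(Y) are uniformly homeomorphic (with respect to the pointwise-convergence uniformities), then X is κ-pseudocompact if and only if Y is κ-pseudocompact. -/
universe u

/-- `C_p(X)`: continuous real-valued functions on `X`; as a subtype of `X → ℝ` it
inherits the uniformity (and topology) of pointwise convergence. -/
abbrev Cp (X : Type*) [TopologicalSpace X] : Type _ := {f : X → ℝ // Continuous f}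

open Filter Set Topology Uniformity

namespace KPC

variable {X Y : Type*} [TopologicalSpace X] [TopologicalSpace Y]

/-- Finite supports for uniformly continuous maps between `Cp` spaces. -/
lemma support_lemma (T : Cp X → Cp Y) (hT : UniformContinuous T) (y : Y) {ε : ℝ} (hε : 0 < ε) :
    ∃ (K : Finset X) (δ : ℝ), 0 < δ ∧
      ∀ f g : Cp X, (∀ x ∈ K, |f.1 x - g.1 x| ≤ δ) → |(T f).1 y - (T g).1 y| ≤ ε := by
  classical
  -- the target entourage in Cp Y
  have hV' : {p : (Y → ℝ) × (Y → ℝ) | |p.1 y - p.2 y| ≤ ε} ∈ 𝓤 (Y → ℝ) := by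
    rw [Pi.uniformity]
    refine Filter.mem_iInf_of_mem y ?_
    refine Filter.mem_comap.2 ⟨{r : ℝ × ℝ | dist r.1 r.2 < ε}, Metric.dist_mem_uniformity hε, ?_⟩
    intro p hp
    simpa [Real.dist_eq] using (le_of_lt hp)
  have hV : {q : Cp Y × Cp Y | |(q.1).1 y - (q.2).1 y| ≤ ε} ∈ 𝓤 (Cp Y) := by
    rw [uniformity_subtype]
    exact Filter.preimage_mem_comap hV'
  have hU : (fun q : Cp X × Cp X => (T q.1, T q.2)) ⁻¹'
      {q : Cp Y × Cp Y | |(q.1).1 y - (q.2).1 y| ≤ ε} ∈ 𝓤 (Cp X) :=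
    Filter.mem_map.1 (hT hV)
  rw [uniformity_subtype] at hU
  obtain ⟨U', hU', hU'sub⟩ := Filter.mem_comap.1 hU
  rw [Pi.uniformity] at hU'
  obtain ⟨I, Ifin, V, hVmem, hVuniv, -, hUeq⟩ := Filter.mem_iInf'.1 hU'
  -- for each x, get δ_x
  have hδx : ∀ x : X, ∃ δx : ℝ, 0 < δx ∧
      ∀ p : (X → ℝ) × (X → ℝ), |p.1 x - p.2 x| ≤ δx → p ∈ V x := by
    intro x
    obtain ⟨W, hW, hWsub⟩ := Filter.mem_comap.1 (hVmem x)
    obtain ⟨δx, hδx, hball⟩ := Metric.mem_uniformity_dist.1 hW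
    refine ⟨δx / 2, by positivity, ?_⟩
    intro p hp
    apply hWsub
    apply hball
    rw [Real.dist_eq]
    exact lt_of_le_of_lt hp (by linarith)
  choose δx hδxpos hδxspec using hδx
  set K : Finset X := Ifin.toFinset with hK
  by_cases hKne : K.Nonempty
  · refine ⟨K, K.inf' hKne δx, ?_, ?_⟩
    · rw [Finset.lt_inf'_iff]
      intro x _
      exact hδxpos x
    · intro f g hfg
      have hmem : (f.1, g.1) ∈ U' := by
        rw [hUeq]
        refine Set.mem_iInter.2 fun x => ?_
        by_cases hx : x ∈ I
        · refine hδxspec x _ ?_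
          have hxK : x ∈ K := by simp [hK, hx]
          exact le_trans (hfg x hxK) (Finset.inf'_le _ hxK)
        · rw [hVuniv x hx]; trivial
      exact hU'sub (show ((f,g) : Cp X × Cp X) ∈ _ ⁻¹' U' from hmem)
  · refine ⟨K, 1, one_pos, ?_⟩
    intro f g _
    have hmem : (f.1, g.1) ∈ U' := by
      rw [hUeq]
      refine Set.mem_iInter.2 fun x => ?_
      have hx : x ∉ I := by
        intro hx
        exact hKne ⟨x, by simp [hK, hx]⟩
      rw [hVuniv x hx]; trivial
    exact hU'sub (show ((f,g) : Cp X × Cp X) ∈ _ ⁻¹' U' from hmem)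



lemma floor_close {a b δ : ℝ} (hδ : 0 < δ) (h : ⌊a / δ⌋ = ⌊b / δ⌋) : |a - b| ≤ δ := by
  have h1 : (⌊a / δ⌋ : ℝ) ≤ a / δ := Int.floor_le _
  have h2 : a / δ < ⌊a / δ⌋ + 1 := Int.lt_floor_add_one _
  have h3 : (⌊b / δ⌋ : ℝ) ≤ b / δ := Int.floor_le _
  have h4 : b / δ < ⌊b / δ⌋ + 1 := Int.lt_floor_add_one _
  rw [h] at h1 h2
  have : |a / δ - b / δ| ≤ 1 := by rw [abs_le]; constructor <;> linarith
  have key : a - b = (a / δ - b / δ) * δ := by field_simp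
  rw [key, abs_mul, abs_of_pos hδ]
  nlinarith [abs_nonneg (a / δ - b / δ)]

/-- pointwise boundedness of the image of a sup-norm ball under a uniformly continuous map. -/
lemma pointwise_bound (T : Cp X → Cp Y) (hT : UniformContinuous T) (y : Y) (n : ℕ) :
    ∃ M : ℝ, ∀ f : Cp X, (∀ x, |f.1 x| ≤ (n : ℝ)) → |(T f).1 y| ≤ M := by
  classical
  obtain ⟨K, δ, hδ, hspec⟩ := support_lemma T hT y one_pos
  set S : Set (Cp X) := {f | ∀ x, |f.1 x| ≤ (n : ℝ)} with hS
  set ρ : Cp X → (K → ℤ) := fun f x => ⌊f.1 x / δ⌋ with hρ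
  have himfin : (ρ '' S).Finite := by
    have hsub : (ρ '' S) ⊆ Set.pi Set.univ
        (fun _ : K => (Set.Icc (⌊-(n : ℝ) / δ⌋) (⌊(n : ℝ) / δ⌋) : Set ℤ)) := by
      rintro v ⟨f, hf, rfl⟩
      intro x _
      have h1 : |f.1 x| ≤ (n : ℝ) := hf x
      rw [abs_le] at h1
      constructor
      · exact Int.floor_le_floor (by apply div_le_div_of_nonneg_right h1.1 hδ.le)
      · exact Int.floor_le_floor (by apply div_le_div_of_nonneg_right h1.2 hδ.le)
    exact Set.Finite.subset (Set.Finite.pi fun _ => Set.finite_Icc _ _) hsub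
  have hSne : S.Nonempty := ⟨⟨fun _ => 0, continuous_const⟩, fun x => by simp⟩
  have himne : (ρ '' S).Nonempty := hSne.image _
  set Fim : Finset (K → ℤ) := himfin.toFinset with hFim
  have hFimne : Fim.Nonempty := by
    rw [hFim, Set.Finite.toFinset_nonempty]; exact himne
  -- choose representatives
  have hrep : ∀ v ∈ Fim, ∃ f, f ∈ S ∧ ρ f = v := by
    intro v hv
    rw [hFim, Set.Finite.mem_toFinset] at hv
    exact hv
  choose rep hrepS hrepρ using hrep
  refine ⟨Fim.sup' hFimne (fun v => if hv : v ∈ Fim then |(T (rep v hv)).1 y| else 0) + 1, ?_⟩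
  intro f hf
  have hv : ρ f ∈ Fim := by
    rw [hFim, Set.Finite.mem_toFinset]
    exact ⟨f, hf, rfl⟩
  have hclose : ∀ x ∈ K, |f.1 x - (rep (ρ f) hv).1 x| ≤ δ := by
    intro x hx
    have h0 := congrFun (hrepρ (ρ f) hv) ⟨x, hx⟩
    exact floor_close hδ (show ⌊f.1 x / δ⌋ = ⌊(rep (ρ f) hv).1 x / δ⌋ from h0.symm)
  have h1 : |(T f).1 y - (T (rep (ρ f) hv)).1 y| ≤ 1 := hspec f _ hclose
  have h2 : |(T (rep (ρ f) hv)).1 y| ≤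
      Fim.sup' hFimne (fun v => if hv : v ∈ Fim then |(T (rep v hv)).1 y| else 0) := by
    have := Finset.le_sup' (f := fun v => if hv : v ∈ Fim then |(T (rep v hv)).1 y| else 0) hv
    rw [dif_pos hv] at this; exact this
  have h3 := abs_sub_abs_le_abs_sub ((T f).1 y) ((T (rep (ρ f) hv)).1 y)
  linarith




/-- clamped ramp at `n` -/
noncomputable def ramp (n : ℕ) (t : ℝ) : ℝ := min 1 (max 0 (t - n))

lemma ramp_nonneg (n : ℕ) (t : ℝ) : 0 ≤ ramp n t := le_min zero_le_one (le_max_left _ _)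

lemma ramp_le_one (n : ℕ) (t : ℝ) : ramp n t ≤ 1 := min_le_left _ _

lemma ramp_eq_zero {n : ℕ} {t : ℝ} (h : t ≤ n) : ramp n t = 0 := by
  unfold ramp
  rw [max_eq_left (by linarith), min_eq_right (by norm_num)]

lemma ramp_eq_one {n : ℕ} {t : ℝ} (h : (n : ℝ) + 1 ≤ t) : ramp n t = 1 := by
  unfold ramp
  rw [max_eq_right (by linarith), min_eq_left (by linarith)]

lemma ramp_continuous (n : ℕ) : Continuous (ramp n) := by
  unfold ramp
  fun_prop

lemma summable_rampser (d : ℕ → ℝ) (hd : ∀ n, 0 ≤ d n) (t : ℝ) :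
    Summable (fun n => d n * ramp n t) := by
  apply summable_of_ne_finset_zero (s := Finset.range ⌈t⌉₊)
  intro m hm
  rw [Finset.mem_range, not_lt] at hm
  have : t ≤ m := le_trans (Nat.le_ceil t) (by exact_mod_cast hm)
  rw [ramp_eq_zero this, mul_zero]

/-- A continuous nonnegative function beating a given sequence. -/
lemma exists_growth (a : ℕ → ℝ) :
    ∃ A : ℝ → ℝ, Continuous A ∧ (∀ t, 0 ≤ A t) ∧
      ∀ (n : ℕ) (t : ℝ), (n : ℝ) + 1 ≤ t → a n < A t := by
  classical
  set d : ℕ → ℝ := fun n => max (a n) 0 + 1 with hd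
  have hdpos : ∀ n, 0 < d n := fun n => by positivity
  set A : ℝ → ℝ := fun t => ∑' m, d m * ramp m t with hA
  have hsum : ∀ t, Summable fun m => d m * ramp m t :=
    summable_rampser d (fun n => (hdpos n).le)
  refine ⟨A, ?_, ?_, ?_⟩
  · rw [continuous_iff_continuousAt]
    intro t₀
    obtain ⟨N, hN⟩ := exists_nat_gt t₀
    have hev : ∀ t ∈ Set.Iio (N : ℝ), A t = ∑ m ∈ Finset.range N, d m * ramp m t := by
      intro t ht
      rw [hA]
      apply tsum_eq_sum
      intro m hm
      rw [Finset.mem_range, not_lt] at hm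
      have : t ≤ m := le_trans (le_of_lt ht) (by exact_mod_cast hm)
      rw [ramp_eq_zero this, mul_zero]
    have hcont : ContinuousAt (fun t => ∑ m ∈ Finset.range N, d m * ramp m t) t₀ := by
      apply Continuous.continuousAt
      exact continuous_finset_sum _ fun m _ => (continuous_const.mul (ramp_continuous m))
    apply hcont.congr
    filter_upwards [Iio_mem_nhds hN] with t ht
    exact (hev t ht).symm
  · intro t
    exact tsum_nonneg fun m => mul_nonneg (hdpos m).le (ramp_nonneg m t)
  · intro n t ht
    have hsumle : ∑ m ∈ Finset.range (n + 1), d m * ramp m t ≤ A t := by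
      apply Summable.sum_le_tsum
      · intro m _
        exact mul_nonneg (hdpos m).le (ramp_nonneg m t)
      · exact hsum t
    have heq : ∀ m ∈ Finset.range (n + 1), d m * ramp m t = d m := by
      intro m hm
      rw [Finset.mem_range, Nat.lt_succ_iff] at hm
      have hmn : (m:ℝ) ≤ (n:ℝ) := by exact_mod_cast hm
      rw [ramp_eq_one (by linarith), mul_one]
    rw [Finset.sum_congr rfl heq] at hsumle
    have hdle : d n ≤ ∑ m ∈ Finset.range (n + 1), d m := by
      apply Finset.single_le_sum (f := d) (fun m _ => (hdpos m).le)
      simp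
    have : a n < d n := by
      rw [hd]
      have := le_max_left (a n) 0
      simp only []
      linarith
    linarith



/-- pseudocompactness transfers through a uniform homeomorphism of Cp spaces. -/
lemma pc_transfer {X Y : Type*} [TopologicalSpace X] [TopologicalSpace Y]
    (e : Cp X ≃ Cp Y) (he : UniformContinuous ⇑e)
    (hXpc : ∀ f : Cp X, ∃ n : ℕ, ∀ x, |f.1 x| ≤ (n : ℝ)) :
    ∀ g : Cp Y, ∃ n : ℕ, ∀ y, |g.1 y| ≤ (n : ℝ) := by
  intro s
  by_contra hs
  push_neg at hs
  choose yy hyy using hs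
  choose M hM using fun (y : Y) (n : ℕ) => pointwise_bound (⇑e) he y n
  set z : ℕ → Y := fun n => yy (n + 1) with hz
  obtain ⟨A, hAc, hA0, hAgt⟩ := exists_growth (fun n => M (z n) n)
  set g : Cp Y := ⟨fun y => A (|s.1 y|), hAc.comp (continuous_abs.comp s.2)⟩ with hg
  obtain ⟨n, hn⟩ := hXpc (e.symm g)
  have h1 : |g.1 (z n)| ≤ M (z n) n := by
    have := hM (z n) n (e.symm g) hn
    rwa [e.apply_symm_apply] at this
  have h2 : M (z n) n < g.1 (z n) := by
    apply hAgt n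
    have h3 := hyy (n + 1)
    push_cast at h3 ⊢
    linarith
  have h4 : g.1 (z n) ≤ |g.1 (z n)| := le_abs_self _
  linarith



lemma finset_enum {α : Type*} (t : Finset α) (ht : t.Nonempty) (n : ℕ) (hcard : t.card ≤ n) :
    ∃ f : Fin n → α, ∀ x ∈ t, ∃ i, f i = x := by
  classical
  set l := t.toList with hl
  have hlen : l.length = t.card := Finset.length_toList t
  refine ⟨fun i => l.getD i ht.choose, ?_⟩
  intro x hx
  have hxl : x ∈ l := by rw [hl]; exact Finset.mem_toList.2 hx
  obtain ⟨k, hk, hkx⟩ := List.mem_iff_getElem.1 hxl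
  refine ⟨⟨k, lt_of_lt_of_le (hlen ▸ hk) hcard⟩, ?_⟩
  simp only [List.getD_eq_getElem?_getD]
  rw [List.getElem?_eq_getElem hk]
  simpa using hkx

set_option maxHeartbeats 1000000 in
lemma kpc_transfer (κ : Cardinal.{u}) (hκ : Cardinal.aleph0 ≤ κ)
    {X Y : Type u} [TopologicalSpace X] [TopologicalSpace Y]
    (e : Cp X ≃ Cp Y) (he : UniformContinuous ⇑e) (he' : UniformContinuous ⇑e.symm)
    (hX : ∀ ι : Type u, Cardinal.mk ι = κ →
      ∀ f : X → ι → ℝ, Continuous f → IsCompact (Set.range f)) :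
    ∀ ι : Type u, Cardinal.mk ι = κ →
      ∀ s : Y → ι → ℝ, Continuous s → IsCompact (Set.range s) := by
  classical
  -- X is pseudocompact
  have hXpc : ∀ f : Cp X, ∃ n : ℕ, ∀ x, |f.1 x| ≤ (n : ℝ) := by
    intro f
    have hne : Nonempty κ.out := by
      rw [← Cardinal.mk_ne_zero_iff, Cardinal.mk_out]
      exact ne_of_gt (lt_of_lt_of_le Cardinal.aleph0_pos hκ)
    obtain ⟨i₀⟩ := hne
    have hcomp := hX κ.out (Cardinal.mk_out κ) (fun x _ => f.1 x)
      (continuous_pi fun _ => f.2)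
    have hproj : IsCompact ((fun v : κ.out → ℝ => v i₀) ''
        Set.range (fun x (_ : κ.out) => f.1 x)) := hcomp.image (continuous_apply i₀)
    have hrange : Set.range f.1 ⊆ (fun v : κ.out → ℝ => v i₀) ''
        Set.range (fun x (_ : κ.out) => f.1 x) := by
      rintro r ⟨x, rfl⟩
      exact ⟨_, ⟨x, rfl⟩, rfl⟩
    have hbdd : Bornology.IsBounded (Set.range f.1) := hproj.isBounded.subset hrange
    obtain ⟨r, hr⟩ := (Metric.isBounded_iff_subset_closedBall 0).1 hbdd
    obtain ⟨n, hn⟩ := exists_nat_ge r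
    refine ⟨n, fun x => ?_⟩
    have := hr ⟨x, rfl⟩
    rw [Metric.mem_closedBall, Real.dist_eq, sub_zero] at this
    linarith
  have hYpc := pc_transfer e he hXpc
  intro I hI s hscont
  by_contra hnc
  choose B hB using fun i : I => hYpc ⟨fun y => s y i, (continuous_apply i).comp hscont⟩
  have hbox : IsCompact (Set.pi Set.univ fun i : I => Set.Icc (-(B i : ℝ)) (B i)) :=
    isCompact_univ_pi fun i => isCompact_Icc
  have hsub : Set.range s ⊆ Set.pi Set.univ fun i : I => Set.Icc (-(B i : ℝ)) (B i) := by
    rintro v ⟨y, rfl⟩ i _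
    have := hB i y
    rw [abs_le] at this
    exact ⟨this.1, this.2⟩
  have hnotcl : ¬ IsClosed (Set.range s) := fun h => hnc (hbox.of_isClosed_subset h hsub)
  obtain ⟨φ, hφcl, hφnr⟩ : ∃ φ, φ ∈ closure (Set.range s) ∧ φ ∉ Set.range s := by
    by_contra h
    push_neg at h
    exact hnotcl (isClosed_of_closure_subset fun v hv => h v hv)
  have happrox : ∀ (F : Finset I) (ε : ℝ), 0 < ε → ∃ y, ∀ i ∈ F, |s y i - φ i| < ε := by
    intro F ε hε
    have hopen : IsOpen {v : I → ℝ | ∀ i ∈ F, |v i - φ i| < ε} := by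
      have heq : {v : I → ℝ | ∀ i ∈ F, |v i - φ i| < ε} =
          ⋂ i ∈ F, (fun v : I → ℝ => v i) ⁻¹' Metric.ball (φ i) ε := by
        ext v
        simp [Real.dist_eq]
      rw [heq]
      exact isOpen_biInter_finset fun i _ =>
        (Metric.isOpen_ball).preimage (continuous_apply i)
    obtain ⟨v, hvo, y, rfl⟩ := _root_.mem_closure_iff.1 hφcl _ hopen
      (fun i _ => by simpa [Real.dist_eq] using hε)
    exact ⟨y, hvo⟩
  -- the directed family of functions on Y
  set hfun : Finset I × ℕ → Y → ℝ :=
    fun d y => max 0 ((∑ i ∈ d.1, min |s y i - φ i| 1) - 1 / (d.2 + 1)) with hhfun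
  set lele : Finset I × ℕ → Finset I × ℕ → Prop :=
    fun d d' => d.1 ⊆ d'.1 ∧ d.2 ≤ d'.2 with hlele
  have hfc : ∀ d, Continuous (hfun d) := by
    intro d
    apply Continuous.max continuous_const
    apply Continuous.sub _ continuous_const
    apply continuous_finset_sum
    intro i _
    apply Continuous.min _ continuous_const
    exact (((continuous_apply i).comp hscont).sub continuous_const).abs
  have hfnn : ∀ d y, 0 ≤ hfun d y := fun d y => le_max_left _ _
  have hmono : ∀ d d', lele d d' → ∀ y, hfun d y ≤ hfun d' y := by
    intro d d' hdd y
    apply max_le_max le_rfl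
    apply sub_le_sub
    · apply Finset.sum_le_sum_of_subset_of_nonneg hdd.1
      intro i _ _
      exact le_min (abs_nonneg _) zero_le_one
    · have h2 : ((d.2 : ℝ) + 1) ≤ ((d'.2 : ℝ) + 1) := by
        have := hdd.2
        push_cast
        linarith [(Nat.cast_le (α := ℝ)).2 hdd.2]
      exact one_div_le_one_div_of_le (by positivity) h2
  have hlele_trans : ∀ {d₁ d₂ d₃}, lele d₁ d₂ → lele d₂ d₃ → lele d₁ d₃ := by
    intro d₁ d₂ d₃ h12 h23
    exact ⟨h12.1.trans h23.1, h12.2.trans h23.2⟩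
  have hZne : ∀ d, ∃ y, hfun d y = 0 := by
    intro d
    obtain ⟨y, hy⟩ := happrox d.1 (1 / ((d.2 + 1) * (d.1.card + 1))) (by positivity)
    refine ⟨y, ?_⟩
    rw [hhfun]
    simp only [max_eq_left_iff]
    have hc : ∀ i ∈ d.1, min |s y i - φ i| 1 ≤ 1 / (((d.2 : ℝ) + 1) * ((d.1.card : ℝ) + 1)) :=
      fun i hi => le_trans (min_le_left _ _) (le_of_lt (hy i hi))
    have hsumle := Finset.sum_le_card_nsmul d.1 _ _ hc
    rw [nsmul_eq_mul] at hsumle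
    have hfin : (d.1.card : ℝ) * (1 / (((d.2 : ℝ) + 1) * ((d.1.card : ℝ) + 1))) ≤
        1 / ((d.2 : ℝ) + 1) := by
      have hk : (0:ℝ) < (d.2 : ℝ) + 1 := by positivity
      have hcd : (0:ℝ) ≤ (d.1.card : ℝ) := Nat.cast_nonneg _
      rw [mul_one_div, div_le_div_iff₀ (by positivity) (by positivity)]
      nlinarith
    linarith
  have hZem : ∀ y, ∃ d, 0 < hfun d y := by
    intro y
    have hne : s y ≠ φ := fun h => hφnr ⟨y, h⟩
    have : ∃ i, s y i ≠ φ i := by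
      by_contra h
      push_neg at h
      exact hne (funext h)
    obtain ⟨i, hi⟩ := this
    have ha : 0 < |s y i - φ i| := abs_pos.2 (sub_ne_zero.2 hi)
    set b : ℝ := min |s y i - φ i| 1 with hb
    have hbpos : 0 < b := lt_min ha one_pos
    obtain ⟨k, hk⟩ := exists_nat_gt (1 / b)
    refine ⟨({i}, k), ?_⟩
    rw [hhfun]
    simp only [Finset.sum_singleton]
    have h1k : 1 / ((k : ℝ) + 1) < b := by
      rw [div_lt_iff₀ (by positivity)]
      rw [div_lt_iff₀ hbpos] at hk
      nlinarith
    simp only [lt_max_iff]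
    right
    linarith
  -- family of plateau functions on Y
  set gg : (Finset I × ℕ) × ℕ → Cp Y := fun dm =>
    ⟨fun y => max 0 (1 - (dm.2 + 1) * hfun dm.1 y),
     continuous_const.max (continuous_const.sub (continuous_const.mul (hfc dm.1)))⟩ with hgg
  set zY : Cp Y := ⟨fun _ => 0, continuous_const⟩ with hzY
  set f₀ : Cp X := e.symm zY with hf₀
  set p : X → (Finset I × ℕ) × ℕ → ℝ := fun x dm => (e.symm (gg dm)).1 x - f₀.1 x with hp
  have hpc : Continuous p := continuous_pi fun dm => (e.symm (gg dm)).2.sub f₀.2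
  have hIinf : Infinite I := by
    rw [Cardinal.infinite_iff, hI]
    exact hκ
  have hcard : Cardinal.mk ((Finset I × ℕ) × ℕ) = κ := by
    have h1 : Cardinal.mk (Finset I) = κ := by
      rw [Cardinal.mk_finset_of_infinite, hI]
    have h2 : Cardinal.mk (Finset I × ℕ) = κ := by
      rw [Cardinal.mk_prod, Cardinal.lift_uzero, h1, Cardinal.mk_nat, Cardinal.lift_aleph0]
      exact Cardinal.mul_eq_left hκ hκ (by simp [Cardinal.aleph0_ne_zero])
    rw [Cardinal.mk_prod, Cardinal.lift_uzero, h2, Cardinal.mk_nat, Cardinal.lift_aleph0]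
    exact Cardinal.mul_eq_left hκ hκ (by simp [Cardinal.aleph0_ne_zero])
  have hT : IsCompact (Set.range p) := hX _ hcard p hpc
  -- (i) pointwise convergence of p to 0 along the directed set
  have hi : ∀ (x : X) (ε : ℝ), 0 < ε → ∃ (d₀ : Finset I × ℕ) (m₀ : ℕ),
      ∀ d m, lele d₀ d → m₀ ≤ m → |p x (d, m)| ≤ ε := by
    intro x ε hε
    obtain ⟨K', δ', hδ', hspec⟩ := support_lemma (⇑e.symm) he' x hε
    choose dch hdch using fun y : Y => hZem y
    by_cases hK : K'.Nonempty
    · set d₀ : Finset I × ℕ := ⟨K'.sup (fun y => (dch y).1), K'.sup (fun y => (dch y).2)⟩ with hd₀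
      have hd₀y : ∀ y ∈ K', 0 < hfun d₀ y := by
        intro y hy
        refine lt_of_lt_of_le (hdch y) (hmono _ _ ?_ y)
        exact ⟨Finset.le_sup (f := fun y => (dch y).1) hy,
               Finset.le_sup (f := fun y => (dch y).2) hy⟩
      set ρ : ℝ := K'.inf' hK (fun y => hfun d₀ y) with hρ
      have hρpos : 0 < ρ := by
        rw [hρ, Finset.lt_inf'_iff]
        exact hd₀y
      obtain ⟨m₀, hm₀⟩ := exists_nat_gt (1 / ρ)
      refine ⟨d₀, m₀, ?_⟩
      intro d m hled hlem
      have hgz : ∀ y ∈ K', (gg (d, m)).1 y = 0 := by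
        intro y hy
        have h1 : ρ ≤ hfun d₀ y := Finset.inf'_le _ hy
        have h2 : hfun d₀ y ≤ hfun d y := hmono _ _ hled y
        have h3 : (1 : ℝ) < (m + 1) * hfun d y := by
          have hm : (m₀ : ℝ) ≤ (m : ℝ) := Nat.cast_le.2 hlem
          rw [div_lt_iff₀ hρpos] at hm₀
          have : (1:ℝ) < (m₀ : ℝ) * ρ := by linarith
          have hρh : ρ ≤ hfun d y := le_trans h1 h2
          nlinarith [hfnn d y]
        rw [hgg]
        dsimp only
        rw [max_eq_left (by linarith)]
      have hclose : ∀ y ∈ K', |(gg (d, m)).1 y - zY.1 y| ≤ δ' := by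
        intro y hy
        rw [hgz y hy]
        simp [hzY]
        exact hδ'.le
      have := hspec (gg (d, m)) zY hclose
      rw [hp]
      dsimp only
      rw [hf₀]
      exact this
    · refine ⟨⟨∅, 0⟩, 0, ?_⟩
      intro d m _ _
      have hclose : ∀ y ∈ K', |(gg (d, m)).1 y - zY.1 y| ≤ δ' := by
        intro y hy
        exact absurd ⟨y, hy⟩ hK
      have := hspec (gg (d, m)) zY hclose
      rw [hp]
      dsimp only
      rw [hf₀]
      exact this
  -- supports for e at each y, quality 1/2
  choose Kc δc hδc hKspec using fun y : Y => support_lemma (⇑e) he y one_half_pos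
  have h7 : ∀ (dm : (Finset I × ℕ) × ℕ) (y : Y), hfun dm.1 y = 0 →
      ∃ x ∈ Kc y, δc y < |p x dm| := by
    intro dm y hy
    by_contra hcon
    push_neg at hcon
    have hclose : ∀ x ∈ Kc y, |(e.symm (gg dm)).1 x - f₀.1 x| ≤ δc y := by
      intro x hx
      have := hcon x hx
      rw [hp] at this
      exact this
    have hres := hKspec y (e.symm (gg dm)) f₀ hclose
    rw [e.apply_symm_apply, hf₀, e.apply_symm_apply] at hres
    have hgy : (gg dm).1 y = 1 := by
      rw [hgg]
      dsimp only
      rw [hy, mul_zero, sub_zero, max_eq_right zero_le_one]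
    rw [hgy] at hres
    rw [hzY] at hres
    norm_num at hres
  -- stratification of Y by the quality of supports
  set Yj : ℕ → Set Y := fun j => {y | (Kc y).card ≤ j + 1 ∧ 1 / ((j : ℝ) + 1) ≤ δc y} with hYj
  have hYcov : ∀ y, ∃ j, y ∈ Yj j := by
    intro y
    refine ⟨max (Kc y).card ⌈1 / δc y⌉₊, ?_, ?_⟩
    · exact le_trans (le_max_left _ _) (Nat.le_succ _)
    · have h1 : 1 / δc y ≤ (max (Kc y).card ⌈1 / δc y⌉₊ : ℝ) + 1 := by
        refine le_trans (Nat.le_ceil _) ?_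
        have : (⌈1 / δc y⌉₊ : ℝ) ≤ (max (Kc y).card ⌈1 / δc y⌉₊ : ℝ) := by
          exact_mod_cast le_max_right _ _
        linarith
      rw [div_le_iff₀ (hδc y)] at h1
      rw [div_le_iff₀ (by positivity)]
      push_cast at h1 ⊢
      nlinarith [hδc y]
  by_cases hdich : ∃ j : ℕ, ∀ d₀ : Finset I × ℕ, ∃ d, lele d₀ d ∧ ∃ y, hfun d y = 0 ∧ y ∈ Yj j
  · -- main case: cofinally many members of the family vanish somewhere in a fixed stratum
    obtain ⟨j, hj⟩ := hdich
    set c : ℝ := 1 / ((j : ℝ) + 1) with hc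
    have hcpos : 0 < c := by rw [hc]; positivity
    set S := {d : Finset I × ℕ // ∃ y, hfun d y = 0 ∧ y ∈ Yj j} with hSdef
    have hScof : ∀ d₀ : Finset I × ℕ, ∃ d : S, lele d₀ d.1 := by
      intro d₀
      obtain ⟨d, hld, hy⟩ := hj d₀
      exact ⟨⟨d, hy⟩, hld⟩
    choose yh hyh1 hyh2 using fun d : S => d.2
    have hKne : ∀ d : S, (Kc (yh d)).Nonempty := by
      intro d
      obtain ⟨x, hx, -⟩ := h7 (d.1, 0) (yh d) (hyh1 d)
      exact ⟨x, hx⟩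
    choose xh hxh using fun d : S => finset_enum (Kc (yh d)) (hKne d) (j + 1) (hyh2 d).1
    have hSne : Nonempty S := ⟨(hScof (∅, 0)).choose⟩
    set 𝓕 : Filter S := ⨅ d₀ : Finset I × ℕ, Filter.principal {d : S | lele d₀ d.1} with h𝓕
    have h𝓕ne : 𝓕.NeBot := by
      refine Filter.iInf_neBot_of_directed ?_ ?_
      · intro a b
        refine ⟨(a.1 ∪ b.1, max a.2 b.2), ?_, ?_⟩ <;>
          · refine Filter.principal_mono.2 ?_
            intro d hd
            refine hlele_trans ?_ hd
            constructor
            · simp [Finset.subset_union_left, Finset.subset_union_right]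
            · simp
      · intro d₀
        rw [Filter.principal_neBot_iff]
        obtain ⟨d, hd⟩ := hScof d₀
        exact ⟨d, hd⟩
    set 𝒱 : Ultrafilter S := @Ultrafilter.of S 𝓕 h𝓕ne with h𝒱
    have htail : ∀ d₀ : Finset I × ℕ, {d : S | lele d₀ d.1} ∈ 𝒱 := by
      intro d₀
      refine Ultrafilter.of_le 𝓕 ?_
      rw [h𝓕]
      exact Filter.mem_iInf_of_mem d₀ (Filter.mem_principal_self _)
    have hlim : ∀ i : Fin (j + 1), ∃ xb : X,
        Filter.Tendsto (fun d : S => p (xh d i)) (𝒱 : Filter S) (nhds (p xb)) := by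
      intro i
      have hle : (Ultrafilter.map (fun d : S => p (xh d i)) 𝒱 : Filter _) ≤
          Filter.principal (Set.range p) := by
        rw [Ultrafilter.coe_map, Filter.map_le_iff_le_comap]
        intro t ht
        obtain ⟨u, hu, hsub2⟩ := Filter.mem_comap.1 ht
        apply Filter.univ_mem'
        intro d
        apply hsub2
        simp only [Set.mem_preimage]
        exact hu ⟨xh d i, rfl⟩
      obtain ⟨a, ha, hle2⟩ := hT.ultrafilter_le_nhds _ hle
      obtain ⟨xb, rfl⟩ := ha
      refine ⟨xb, ?_⟩
      rwa [Ultrafilter.coe_map] at hle2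
    choose xb hxb using hlim
    choose dth mth hth using fun i : Fin (j + 1) => hi (xb i) (c / 4) (by positivity)
    set d₁ : Finset I × ℕ := (Finset.univ.sup fun i : Fin (j + 1) => (dth i).1,
      Finset.univ.sup fun i : Fin (j + 1) => (dth i).2) with hd₁
    set m₁ : ℕ := Finset.univ.sup mth with hm₁
    have hφsm : ∀ i : Fin (j + 1), |p (xb i) (d₁, m₁)| ≤ c / 4 := by
      intro i
      refine hth i d₁ m₁ ⟨?_, ?_⟩ ?_
      · rw [hd₁]
        exact Finset.le_sup (f := fun i : Fin (j + 1) => (dth i).1) (Finset.mem_univ i)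
      · rw [hd₁]
        exact Finset.le_sup (f := fun i : Fin (j + 1) => (dth i).2) (Finset.mem_univ i)
      · rw [hm₁]
        exact Finset.le_sup (f := mth) (Finset.mem_univ i)
    have hAi : ∀ i : Fin (j + 1), {d : S | |p (xh d i) (d₁, m₁)| < c / 2} ∈ 𝒱 := by
      intro i
      have hconv : Filter.Tendsto (fun d : S => p (xh d i) (d₁, m₁)) (𝒱 : Filter S)
          (nhds (p (xb i) (d₁, m₁))) :=
        ((continuous_apply (d₁, m₁)).continuousAt.tendsto).comp (hxb i)
      have hball : Metric.ball (p (xb i) (d₁, m₁)) (c / 4) ∈ nhds (p (xb i) (d₁, m₁)) :=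
        Metric.ball_mem_nhds _ (by positivity)
      refine Filter.mem_of_superset (hconv hball) ?_
      intro d hd
      simp only [Set.mem_preimage, Metric.mem_ball, Real.dist_eq] at hd
      have := hφsm i
      simp only [Set.mem_setOf_eq]
      have habs := abs_sub_abs_le_abs_sub (p (xh d i) (d₁, m₁)) (p (xb i) (d₁, m₁))
      linarith
    have hbig : ((⋂ i : Fin (j + 1), {d : S | |p (xh d i) (d₁, m₁)| < c / 2}) ∩
        {d : S | lele d₁ d.1}) ∈ 𝒱 :=
      Filter.inter_mem ((Filter.iInter_mem).2 hAi) (htail d₁)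
    obtain ⟨d', hd'⟩ := Filter.nonempty_of_mem hbig
    have hy0 : hfun d₁ (yh d') = 0 := by
      have h1 := hmono d₁ d'.1 hd'.2 (yh d')
      rw [hyh1 d'] at h1
      exact le_antisymm h1 (hfnn _ _)
    obtain ⟨x, hxK, hxgt⟩ := h7 (d₁, m₁) (yh d') hy0
    obtain ⟨i, hix⟩ := hxh d' x hxK
    have h1 : |p (xh d' i) (d₁, m₁)| < c / 2 := Set.mem_iInter.1 hd'.1 i
    rw [hix] at h1
    have h2 : c ≤ δc (yh d') := (hyh2 d').2
    linarith
  · -- otherwise Y is not pseudocompact, contradiction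
    push_neg at hdich
    choose dj hdj using hdich
    set dC : ℕ → Finset I × ℕ := fun n => ((Finset.range (n + 1)).sup fun k => (dj k).1,
      (Finset.range (n + 1)).sup fun k => (dj k).2) with hdC
    have hchd : ∀ n, lele (dj n) (dC n) := by
      intro n
      constructor
      · rw [hdC]
        exact Finset.le_sup (f := fun k => (dj k).1) (Finset.mem_range.2 (Nat.lt_succ_self n))
      · rw [hdC]
        exact Finset.le_sup (f := fun k => (dj k).2) (Finset.mem_range.2 (Nat.lt_succ_self n))
    have hchmono : ∀ a b : ℕ, a ≤ b → lele (dC a) (dC b) := by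
      intro a b hab
      constructor
      · rw [hdC]
        dsimp only
        exact Finset.sup_mono (f := fun k => (dj k).1) (Finset.range_subset_range.2 (Nat.succ_le_succ hab))
      · rw [hdC]
        dsimp only
        exact Finset.sup_mono (f := fun k => (dj k).2) (Finset.range_subset_range.2 (Nat.succ_le_succ hab))
    set Hf : Y → ℝ := fun y => ∑' n : ℕ, (1 / 2 : ℝ) ^ n * min (hfun (dC n) y) 1 with hHf
    have hterm_nn : ∀ (n : ℕ) (y : Y), 0 ≤ (1 / 2 : ℝ) ^ n * min (hfun (dC n) y) 1 :=
      fun n y => mul_nonneg (by positivity) (le_min (hfnn _ _) zero_le_one)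
    have hterm_le : ∀ (n : ℕ) (y : Y), (1 / 2 : ℝ) ^ n * min (hfun (dC n) y) 1 ≤ (1 / 2 : ℝ) ^ n :=
      fun n y => mul_le_of_le_one_right (by positivity) (min_le_right _ _)
    have hHsummable : ∀ y, Summable fun n => (1 / 2 : ℝ) ^ n * min (hfun (dC n) y) 1 :=
      fun y => Summable.of_nonneg_of_le (fun n => hterm_nn n y) (fun n => hterm_le n y)
        summable_geometric_two
    have hHcont : Continuous Hf := by
      rw [hHf]
      apply continuous_tsum ?_ summable_geometric_two ?_
      · intro n
        exact continuous_const.mul ((hfc _).min continuous_const)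
      · intro n y
        rw [Real.norm_eq_abs, abs_of_nonneg (hterm_nn n y)]
        exact hterm_le n y
    have hHpos : ∀ y, 0 < Hf y := by
      intro y
      obtain ⟨j0, hj0⟩ := hYcov y
      have hne0 : hfun (dC j0) y ≠ 0 := fun h0 => (hdj j0 (dC j0) (hchd j0) y h0) hj0
      have hpos : 0 < hfun (dC j0) y := lt_of_le_of_ne (hfnn _ _) (Ne.symm hne0)
      exact Summable.tsum_pos (hHsummable y) (fun n => hterm_nn n y) j0
        (mul_pos (by positivity) (lt_min hpos one_pos))
    have hHsmall : ∀ n : ℕ, ∃ y, Hf y ≤ (1 / 2 : ℝ) ^ n := by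
      intro n
      obtain ⟨y, hy⟩ := hZne (dC n)
      refine ⟨y, ?_⟩
      have hzero : ∀ m ∈ Finset.range (n + 1), (1 / 2 : ℝ) ^ m * min (hfun (dC m) y) 1 = 0 := by
        intro m hm
        rw [Finset.mem_range, Nat.lt_succ_iff] at hm
        have h1 : hfun (dC m) y ≤ 0 := by
          have := hmono (dC m) (dC n) (hchmono m n hm) y
          rw [hy] at this
          exact this
        have h2 : hfun (dC m) y = 0 := le_antisymm h1 (hfnn _ _)
        rw [h2]
        simp
      have hsplit := Summable.sum_add_tsum_nat_add (f := fun m => (1 / 2 : ℝ) ^ m * min (hfun (dC m) y) 1) (n + 1) (hHsummable y)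
      have hsum0 : ∑ m ∈ Finset.range (n + 1), (1 / 2 : ℝ) ^ m * min (hfun (dC m) y) 1 = 0 :=
        Finset.sum_eq_zero hzero
      have htail : (∑' k : ℕ, (1 / 2 : ℝ) ^ (k + (n + 1)) * min (hfun (dC (k + (n + 1))) y) 1) ≤
          ∑' k : ℕ, (1 / 2 : ℝ) ^ (k + (n + 1)) := by
        apply Summable.tsum_le_tsum
        · intro k
          exact hterm_le (k + (n + 1)) y
        · exact (summable_nat_add_iff (n + 1)).2 (hHsummable y)
        · exact (summable_nat_add_iff (n + 1)).2 summable_geometric_two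
      have hgeom : (∑' k : ℕ, (1 / 2 : ℝ) ^ (k + (n + 1))) = (1 / 2 : ℝ) ^ n := by
        have h1 : ∀ k : ℕ, (1 / 2 : ℝ) ^ (k + (n + 1)) = (1 / 2 : ℝ) ^ k * (1 / 2 : ℝ) ^ (n + 1) :=
          fun k => pow_add _ _ _
        rw [tsum_congr h1, tsum_mul_right, tsum_geometric_two]
        rw [pow_succ]
        ring
      rw [hHf]
      dsimp only
      rw [← hsplit, hsum0, zero_add]
      rw [hgeom] at htail
      exact htail
    have hHinv : Continuous fun y => (Hf y)⁻¹ := hHcont.inv₀ fun y => ne_of_gt (hHpos y)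
    obtain ⟨n, hn⟩ := hYpc ⟨fun y => (Hf y)⁻¹, hHinv⟩
    obtain ⟨y, hy⟩ := hHsmall n
    have h1 : ((1 / 2 : ℝ) ^ n)⁻¹ ≤ (Hf y)⁻¹ := by
      apply inv_anti₀ (hHpos y) hy
    have h1' : ((1 / 2 : ℝ) ^ n)⁻¹ = 2 ^ n := by
      rw [one_div, inv_pow, inv_inv]
    have h2 := hn y
    have h3 : |(Hf y)⁻¹| = (Hf y)⁻¹ := abs_of_pos (inv_pos.2 (hHpos y))
    rw [h3] at h2
    have h4 : (n : ℝ) < 2 ^ n := by exact_mod_cast Nat.lt_two_pow_self (n := n)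
    rw [h1'] at h1
    linarith

end KPC

/-- Main theorem: if `C_p(X)` and `C_p(Y)` are uniformly homeomorphic, then for any
infinite cardinal `κ`, `X` is `κ`-pseudocompact iff `Y` is `κ`-pseudocompact. -/
theorem kappaPseudocompact_iff_of_uniformHomeomorph
    (κ : Cardinal.{u}) (hκ : Cardinal.aleph0 ≤ κ)
    (X Y : Type u) [TopologicalSpace X] [T35Space X] [TopologicalSpace Y] [T35Space Y]
    (e : Cp X ≃ Cp Y) (he : UniformContinuous e) (he' : UniformContinuous e.symm) :
    (∀ ι : Type u, Cardinal.mk ι = κ →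
        ∀ f : X → ι → ℝ, Continuous f → IsCompact (Set.range f)) ↔
      (∀ ι : Type u, Cardinal.mk ι = κ →
        ∀ f : Y → ι → ℝ, Continuous f → IsCompact (Set.range f)) := by
  constructor
  · intro hX
    exact KPC.kpc_transfer κ hκ e he he' hX
  · intro hY
    have h2 : UniformContinuous ⇑e.symm.symm := by
      rw [Equiv.symm_symm]
      exact he
    exact KPC.kpc_transfer κ hκ e.symm he' h2 hY
end

section
/- (Uspenskiĭ) If C_p(X) and C_p(Y) are uniformly homeomorphic, then X is pseudocompact if and only if Y is pseudocompact. -/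
open Set Finset

/-- ramp from 0 to 1 between a and b -/
noncomputable def Uspenskii.ramp (a b s : ℝ) : ℝ := max 0 (min 1 ((s - a) / (b - a)))

namespace Uspenskii

lemma ramp_continuous (a b : ℝ) : Continuous (ramp a b) := by
  unfold ramp; fun_prop

lemma ramp_nonneg (a b s : ℝ) : 0 ≤ ramp a b s := le_max_left _ _

lemma ramp_eq_zero {a b s : ℝ} (hab : a < b) (h : s ≤ a) : ramp a b s = 0 := by
  unfold ramp
  have : (s - a) / (b - a) ≤ 0 :=
    div_nonpos_of_nonpos_of_nonneg (by linarith) (by linarith)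
  rw [max_eq_left]
  exact le_trans (min_le_right _ _) this

lemma ramp_eq_one {a b s : ℝ} (hab : a < b) (h : b ≤ s) : ramp a b s = 1 := by
  unfold ramp
  have hba : (0:ℝ) < b - a := by linarith
  have : (1:ℝ) ≤ (s - a) / (b - a) := by
    rw [le_div_iff₀ hba]; linarith
  rw [min_eq_left this, max_eq_right zero_le_one]

/-- Given a strictly increasing sequence `t` with `t n > n` and arbitrary `c`,
there is a continuous nonnegative `Φ : ℝ → ℝ` with `Φ (t n) ≥ c n + 1`. -/
lemma exists_dominating (t : ℕ → ℝ) (ht : StrictMono t) (htn : ∀ n : ℕ, (n : ℝ) < t n)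
    (c : ℕ → ℝ) :
    ∃ Φ : ℝ → ℝ, Continuous Φ ∧ (∀ s, 0 ≤ Φ s) ∧ ∀ n, c n + 1 ≤ Φ (t n) := by
  set e : ℕ → ℝ := fun n => |c (n + 1)| + 1 with he
  set F : ℕ → ℝ → ℝ := fun n s => e n * ramp (t n) (t (n + 1)) s with hF
  set Φ : ℝ → ℝ := fun s => (|c 0| + 1) + ∑' n, F n s with hΦ
  have hFnonneg : ∀ n s, 0 ≤ F n s := fun n s =>
    mul_nonneg (by positivity) (ramp_nonneg _ _ _)
  have hzero : ∀ n s, s ≤ t n → F n s = 0 := by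
    intro n s hs
    simp [hF, ramp_eq_zero (ht (Nat.lt_succ_self n)) hs]
  have hsum : ∀ (N : ℕ) (s : ℝ), s ≤ t N → ∑' n, F n s = ∑ n ∈ Finset.range N, F n s := by
    intro N s hs
    refine tsum_eq_sum ?_
    intro n hn
    rw [Finset.mem_range, not_lt] at hn
    exact hzero n s (hs.trans (ht.monotone hn))
  have hN : ∀ s : ℝ, ∃ N : ℕ, s < t N := by
    intro s
    obtain ⟨N, hNs⟩ := exists_nat_ge s
    exact ⟨N, lt_of_le_of_lt hNs (htn N)⟩
  refine ⟨Φ, ?_, ?_, ?_⟩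
  · rw [continuous_iff_continuousAt]
    intro s₀
    obtain ⟨N, hNs⟩ := hN s₀
    have hev : Φ =ᶠ[nhds s₀] fun s => (|c 0| + 1) + ∑ n ∈ Finset.range N, F n s := by
      filter_upwards [Iio_mem_nhds hNs] with s hs
      simp only [hΦ, hsum N s (le_of_lt hs)]
    refine ContinuousAt.congr ?_ hev.symm
    apply ContinuousAt.add continuousAt_const
    refine Continuous.continuousAt ?_
    exact continuous_finset_sum _ fun n _ =>
      (continuous_const.mul (ramp_continuous _ _))
  · intro s
    have : 0 ≤ ∑' n, F n s := tsum_nonneg (fun n => hFnonneg n s)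
    have h0 : (0:ℝ) ≤ |c 0| + 1 := by positivity
    simp only [hΦ]; linarith
  · intro N
    have hval : Φ (t N) = (|c 0| + 1) + ∑ n ∈ Finset.range N, e n := by
      simp only [hΦ, hsum N (t N) le_rfl]
      congr 1
      refine Finset.sum_congr rfl fun n hn => ?_
      rw [Finset.mem_range] at hn
      have : t (n + 1) ≤ t N := ht.monotone hn
      simp [hF, ramp_eq_one (ht (Nat.lt_succ_self n)) this]
    rw [hval]
    have key : ∀ N : ℕ, |c N| + 1 ≤ (|c 0| + 1) + ∑ n ∈ Finset.range N, e n := by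
      intro N
      induction N with
      | zero => simp
      | succ k ih =>
        rw [Finset.sum_range_succ]
        have h1 : (0:ℝ) ≤ ∑ n ∈ Finset.range k, e n :=
          Finset.sum_nonneg fun n _ => by positivity
        have h3 : (0:ℝ) ≤ |c k| := abs_nonneg _
        simp only [he]
        linarith [ih]
    have := key N
    have habs : c N ≤ |c N| := le_abs_self _
    linarith

/-- `C_p(X)` is σ-totally-bounded. -/
def SigmaTB (X : Type*) [TopologicalSpace X] : Prop :=
  ∃ A : ℕ → Set (Cp X), (∀ n, TotallyBounded (A n)) ∧ ⋃ n, A n = Set.univ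

lemma sigmaTB_of_pseudocompact {X : Type*} [TopologicalSpace X]
    (h : ∀ f : X → ℝ, Continuous f → ∃ M : ℝ, ∀ x, |f x| ≤ M) : SigmaTB X := by
  refine ⟨fun n => {f : Cp X | ∀ x, |f.1 x| ≤ (n : ℝ)}, fun n => ?_, ?_⟩
  · have hS : TotallyBounded (Set.pi Set.univ fun _ : X => Icc (-(n:ℝ)) (n:ℝ)) :=
      (isCompact_univ_pi fun _ => isCompact_Icc).totallyBounded
    have hpre : TotallyBounded
        ((Subtype.val : Cp X → X → ℝ) ⁻¹' Set.pi Set.univ fun _ : X => Icc (-(n:ℝ)) (n:ℝ)) :=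
      totallyBounded_preimage isUniformEmbedding_subtype_val.isUniformInducing hS
    refine hpre.subset ?_
    intro f hf
    intro x _
    exact abs_le.1 (hf x)
  · ext f
    simp only [Set.mem_iUnion, Set.mem_univ, iff_true, Set.mem_setOf_eq]
    obtain ⟨M, hM⟩ := h f.1 f.2
    refine ⟨⌈max M 0⌉₊, fun x => ?_⟩
    calc |f.1 x| ≤ M := hM x
      _ ≤ max M 0 := le_max_left _ _
      _ ≤ (⌈max M 0⌉₊ : ℝ) := Nat.le_ceil _

lemma pseudocompact_of_sigmaTB {X : Type*} [TopologicalSpace X] (hX : SigmaTB X) :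
    ∀ f : X → ℝ, Continuous f → ∃ M : ℝ, ∀ x, |f x| ≤ M := by
  obtain ⟨A, hTB, hcover⟩ := hX
  intro f hfc
  by_contra hb
  push_neg at hb
  have hf : ∀ M : ℝ, ∃ x, M < |f x| := fun M => hb M
  -- recursively chosen points where |f| grows
  let x : ℕ → X := fun n =>
    Nat.rec (hf 0).choose (fun n xn => (hf (max ((n : ℝ) + 1) |f xn|)).choose) n
  set t : ℕ → ℝ := fun n => |f (x n)| with htdef
  have h0 : (0 : ℝ) < t 0 := (hf 0).choose_spec
  have hstep : ∀ n : ℕ, max ((n : ℝ) + 1) (t n) < t (n + 1) := fun n =>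
    (hf (max ((n : ℝ) + 1) |f (x n)|)).choose_spec
  have ht : StrictMono t :=
    strictMono_nat_of_lt_succ fun n => lt_of_le_of_lt (le_max_right _ _) (hstep n)
  have htn : ∀ n : ℕ, (n : ℝ) < t n := by
    intro n
    cases n with
    | zero => simpa using h0
    | succ k =>
      have := lt_of_le_of_lt (le_max_left ((k : ℝ) + 1) (t k)) (hstep k)
      push_cast
      linarith
  -- bounds for each A n at the point x n
  have hc : ∀ n : ℕ, ∃ M : ℝ, ∀ h ∈ A n, |h.1 (x n)| ≤ M := by
    intro n
    have huc : UniformContinuous fun h : Cp X => h.1 (x n) :=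
      (Pi.uniformContinuous_proj _ (x n)).comp uniformContinuous_subtype_val
    have himg : TotallyBounded ((fun h : Cp X => h.1 (x n)) '' A n) :=
      (hTB n).image huc
    obtain ⟨M, hM⟩ := isBounded_iff_forall_norm_le.1 himg.isBounded
    exact ⟨M, fun h hh => hM _ ⟨h, hh, rfl⟩⟩
  set c : ℕ → ℝ := fun n => (hc n).choose with hcdef
  obtain ⟨Φ, hΦc, hΦ0, hΦge⟩ := exists_dominating t ht htn c
  set g : Cp X := ⟨fun z => Φ |f z|, hΦc.comp hfc.abs⟩ with hgdef
  have hgmem : g ∈ ⋃ n, A n := hcover ▸ Set.mem_univ g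
  obtain ⟨N, hgN⟩ := Set.mem_iUnion.1 hgmem
  have h1 : |g.1 (x N)| ≤ c N := (hc N).choose_spec g hgN
  have h2 : g.1 (x N) = Φ (t N) := rfl
  have h3 : c N + 1 ≤ Φ (t N) := hΦge N
  have h4 : |g.1 (x N)| = Φ (t N) := by rw [h2, abs_of_nonneg (hΦ0 _)]
  rw [h4] at h1
  linarith

lemma sigmaTB_transfer {Z : Type*} {W : Type*} [TopologicalSpace Z] [TopologicalSpace W]
    (u : Cp Z ≃ Cp W) (hu : UniformContinuous u) (h : SigmaTB Z) : SigmaTB W := by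
  obtain ⟨A, hTB, hcover⟩ := h
  refine ⟨fun n => u '' A n, fun n => (hTB n).image hu, ?_⟩
  rw [← Set.image_iUnion, hcover, Set.image_univ, Set.range_eq_univ]
  exact u.surjective

end Uspenskii

/-- Uspenskiĭ's theorem: if `C_p(X)` and `C_p(Y)` are uniformly homeomorphic, then `X` is
pseudocompact iff `Y` is pseudocompact. -/
theorem pseudocompact_iff_of_uniformHomeomorph
    (X : Type*) (Y : Type*) [TopologicalSpace X] [T35Space X]
    [TopologicalSpace Y] [T35Space Y]
    (e : Cp X ≃ Cp Y) (he : UniformContinuous e) (he' : UniformContinuous e.symm) :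
    (∀ f : X → ℝ, Continuous f → ∃ M : ℝ, ∀ x, |f x| ≤ M) ↔
      (∀ f : Y → ℝ, Continuous f → ∃ M : ℝ, ∀ y, |f y| ≤ M) := by
  constructor
  · intro h
    exact Uspenskii.pseudocompact_of_sigmaTB
      (Uspenskii.sigmaTB_transfer e he (Uspenskii.sigmaTB_of_pseudocompact h))
  · intro h
    exact Uspenskii.pseudocompact_of_sigmaTB
      (Uspenskii.sigmaTB_transfer e.symm he' (Uspenskii.sigmaTB_of_pseudocompact h))
end
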